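/- arXiv:1210.5910 — 6 statements merged into one kernel-verified Lean document; each statement's English description precedes it below -/
import Mathlib

section
/- Let D ⊆ ℂ be open, f : D → ℂ, z ∈ D, and z₀ ∈ ℂ with z₀ ≠ z. Suppose f is differentiable at z in the real sense with real Fréchet derivative L; set f_x = L(1), f_y = L(i), f_z = (f_x − i·f_y)/2, f_{z̄} = (f_x + i·f_y)/2, and Jacobian J_f(z) = |f_z|² − |f_{z̄}|². If J_f(z) ≠ 0 and μ = f_{z̄}/f_z satisfies |μ| < 1, then |∂_T^{z₀} f(z)|² / |J_f(z)| = |1 − ((conj(z − z₀))/(z − z₀))·μ|² / (1 − |μ|²), where ∂_T^{z₀} f(z) is the one-sided derivative of f at z in the tangent direction τ = i·(z − z₀)/|z − z₀|, i.e., ∂_T^{z₀} f(z) = lim_{t→0⁺} (f(z + t·τ) − f(z))/t. -/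
open Filter Topology ComplexConjugate

/-!
The one-sided derivative in direction `τ` is `L τ`, and every `ℝ`-linear map of `ℂ` is
`v ↦ f_z v + f_{z̄} v̄`. As `|τ| = 1` and `τ̄ / τ = -q` with `q = conj(z - z₀) / (z - z₀)`,
this gives `|∂_T f(z)| = |f_z - q f_{z̄}| = |f_z| |1 - q μ|`, while `J = |f_z|² (1 - |μ|²)`.
If `f_z = 0` then `μ = 0` by the convention `x / 0 = 0`, and both sides equal `1`.
-/

theorem HasFDerivAt.tendsto_slope_along {E F : Type*} [NormedAddCommGroup E] [NormedSpace ℝ E]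
    [NormedAddCommGroup F] [NormedSpace ℝ F] {f : E → F} {L : E →L[ℝ] F} {z : E}
    (hf : HasFDerivAt f L z) (v : E) :
    Tendsto (fun t : ℝ => t⁻¹ • (f (z + t • v) - f z)) (𝓝[≠] 0) (𝓝 (L v)) := by
  have hline : HasDerivAt (fun t : ℝ => z + t • v) v 0 := by
    simpa using ((hasDerivAt_id (0 : ℝ)).smul_const v).const_add z
  have hcomp := (show HasFDerivAt f L (z + (0 : ℝ) • v) by simpa using hf).comp_hasDerivAt 0 hline
  simpa using hcomp.tendsto_slope_zero

theorem LinearMap.apply_eq_mul_add_mul_conj (L : ℂ →ₗ[ℝ] ℂ) (v : ℂ) :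
    L v = (L 1 - Complex.I * L Complex.I) / 2 * v + (L 1 + Complex.I * L Complex.I) / 2 * conj v := by
  have hv : v = v.re • (1 : ℂ) + v.im • Complex.I := by simp [Complex.real_smul]
  conv_lhs => rw [hv, map_add, map_smul, map_smul]
  conv_rhs => rw [← Complex.re_add_im v]
  simp only [Complex.real_smul, map_add, map_mul, Complex.conj_ofReal, Complex.conj_I]
  linear_combination (v.im : ℂ) * L Complex.I * Complex.I_sq

theorem Complex.mul_add_mul_conj_tangent (a b u : ℂ) (hu : u ≠ 0) :
    a * (I * (u / ‖u‖)) + b * conj (I * (u / ‖u‖)) = I * (u / ‖u‖) * (a - conj u / u * b) := by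
  have hr : ((‖u‖ : ℝ) : ℂ) ≠ 0 := by exact_mod_cast norm_ne_zero_iff.mpr hu
  simp only [map_mul, map_div₀, Complex.conj_I, Complex.conj_ofReal]
  field_simp
  ring

theorem Complex.norm_sub_mul_sq_div_abs_eq {a b q : ℂ} (hq : ‖q‖ = 1)
    (hab : ‖a‖ ^ 2 - ‖b‖ ^ 2 ≠ 0) (hlt : ‖b / a‖ < 1) :
    ‖a - q * b‖ ^ 2 / |‖a‖ ^ 2 - ‖b‖ ^ 2| = ‖1 - q * (b / a)‖ ^ 2 / (1 - ‖b / a‖ ^ 2) := by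
  rcases eq_or_ne a 0 with rfl | ha
  · have hb : ‖b‖ ≠ 0 := by simpa using hab
    simp [hq, hb]
  · have ha' : 0 < ‖a‖ := norm_pos_iff.mpr ha
    have hba : ‖b‖ < ‖a‖ := by rwa [norm_div, div_lt_one ha'] at hlt
    have hJ : 0 < ‖a‖ ^ 2 - ‖b‖ ^ 2 := by nlinarith [norm_nonneg b]
    have hfactor : a - q * b = a * (1 - q * (b / a)) := by field_simp
    rw [abs_of_pos hJ, hfactor, norm_mul, norm_div, mul_pow, div_pow]
    field_simp

theorem tangent_dilatation_formula_general (f : ℂ → ℂ)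
    (z z₀ : ℂ) (hz₀ : z₀ ≠ z) (L : ℂ →L[ℝ] ℂ)
    (hf : HasFDerivAt f L z)
    (fz fzbar : ℂ)
    (hfz : fz = (L 1 - Complex.I * L Complex.I) / 2)
    (hfzbar : fzbar = (L 1 + Complex.I * L Complex.I) / 2)
    (hJ : ‖fz‖ ^ 2 - ‖fzbar‖ ^ 2 ≠ 0)
    (μ : ℂ) (hμdef : μ = fzbar / fz) (hμ : ‖μ‖ < 1)
    (w : ℂ)
    (hw : Tendsto
      (fun t : ℝ =>
        (f (z + (t : ℂ) * (Complex.I * ((z - z₀) / ((‖z - z₀‖ : ℝ) : ℂ)))) - f z)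
          / (t : ℂ))
      (𝓝[>] (0 : ℝ)) (𝓝 w)) :
    ‖w‖ ^ 2 / |‖fz‖ ^ 2 - ‖fzbar‖ ^ 2| =
      ‖1 - ((starRingEnd ℂ) (z - z₀) / (z - z₀)) * μ‖ ^ 2 /
        (1 - (‖μ‖) ^ 2) := by
  subst hμdef
  have hu : z - z₀ ≠ 0 := sub_ne_zero.mpr hz₀.symm
  set τ : ℂ := Complex.I * ((z - z₀) / ((‖z - z₀‖ : ℝ) : ℂ))
  have hwτ : w = L τ := by
    refine tendsto_nhds_unique hw ?_
    simpa [Complex.real_smul, div_eq_inv_mul] using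
      (hf.tendsto_slope_along τ).mono_left (nhdsGT_le_nhdsNE 0)
  have hLτ : L τ = fz * τ + fzbar * conj τ := by
    rw [hfz, hfzbar]
    exact L.toLinearMap.apply_eq_mul_add_mul_conj τ
  have hτ : ‖τ‖ = 1 := by simp [τ, hu]
  rw [hwτ, hLτ, Complex.mul_add_mul_conj_tangent _ _ _ hu, norm_mul, hτ, one_mul]
  have hq : ‖conj (z - z₀) / (z - z₀)‖ = 1 := by
    rw [norm_div, Complex.norm_conj, div_self (norm_ne_zero_iff.mpr hu)]
  exact Complex.norm_sub_mul_sq_div_abs_eq hq hJ hμ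

/-- If `f` is real-differentiable at `z ∈ D` (open) with real Fréchet derivative `L`,
`f_z = (L 1 − i·L i)/2`, `f_{z̄} = (L 1 + i·L i)/2`, Jacobian `J = |f_z|² − |f_{z̄}|² ≠ 0`,
and `μ = f_{z̄}/f_z` satisfies `|μ| < 1`, then for the one-sided derivative `w` of `f` at `z`
in the tangent direction `τ = i·(z−z₀)/|z−z₀|` one has
`|w|²/|J| = |1 − (conj(z−z₀)/(z−z₀))·μ|² / (1 − |μ|²)`. -/
theorem tangent_dilatation_formula (D : Set ℂ) (hD : IsOpen D) (f : ℂ → ℂ)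
    (z z₀ : ℂ) (hz : z ∈ D) (hz₀ : z₀ ≠ z) (L : ℂ →L[ℝ] ℂ)
    (hf : HasFDerivAt f L z)
    (fz fzbar : ℂ)
    (hfz : fz = (L 1 - Complex.I * L Complex.I) / 2)
    (hfzbar : fzbar = (L 1 + Complex.I * L Complex.I) / 2)
    (hJ : ‖fz‖ ^ 2 - ‖fzbar‖ ^ 2 ≠ 0)
    (μ : ℂ) (hμdef : μ = fzbar / fz) (hμ : ‖μ‖ < 1)
    (w : ℂ)
    (hw : Tendsto
      (fun t : ℝ =>
        (f (z + (t : ℂ) * (Complex.I * ((z - z₀) / ((‖z - z₀‖ : ℝ) : ℂ)))) - f z)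
          / (t : ℂ))
      (𝓝[>] (0 : ℝ)) (𝓝 w)) :
    ‖w‖ ^ 2 / |‖fz‖ ^ 2 - ‖fzbar‖ ^ 2| =
      ‖1 - ((starRingEnd ℂ) (z - z₀) / (z - z₀)) * μ‖ ^ 2 /
        (1 - (‖μ‖) ^ 2) :=
  tangent_dilatation_formula_general f z z₀ hz₀ L hf fz fzbar hfz hfzbar hJ μ hμdef hμ w hw
end

section
/- Let D ⊆ ℂ be a domain, z₀ ∈ D, and φ : D → ℝ a function that is integrable on some disk B(z₀, ε₀) ⊆ D. If there is a collection of real numbers φ_ε, ε ∈ (0, ε₀], such that limsup_{ε→0} ⨍_{B(z₀,ε)} |φ(z) − φ_ε| dm(z) < ∞, then φ has finite mean oscillation at z₀. -/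
/-! The mean is, up to a factor 2, the best constant approximation in `L¹`: for any constant `c`,
`|⨍ φ - c| ≤ ⨍ |φ - c|`, so by the triangle inequality `⨍ |φ - ⨍ φ| ≤ 2 ⨍ |φ - c|`.
Applied with `c = φ_ε` on each disk `B(z₀, ε)`, this bounds the mean oscillation by `2C`. -/

open MeasureTheory Filter Topology

/-- `φ` has finite mean oscillation at `z₀` relative to the domain `D`: it is integrable
on some disk `B(z₀, ε₀) ⊆ D` and
`limsup_{ε→0} ⨍_{B(z₀,ε)} |φ − φ̃_ε(z₀)| dm < ∞`, where `φ̃_ε(z₀)` is the mean of `φ`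
over `B(z₀, ε)` (the limsup condition is expressed as an eventual bound). -/
def HasFiniteMeanOscillationAt (D : Set ℂ) (φ : ℂ → ℝ) (z₀ : ℂ) : Prop :=
  ∃ ε₀ > (0 : ℝ), Metric.ball z₀ ε₀ ⊆ D ∧ IntegrableOn φ (Metric.ball z₀ ε₀) ∧
    ∃ C : ℝ, ∀ᶠ ε in 𝓝[>] (0 : ℝ),
      (⨍ w in Metric.ball z₀ ε, |φ w - ⨍ u in Metric.ball z₀ ε, φ u|) ≤ C

section MeanOscillation

variable {α : Type*} [MeasurableSpace α] {μ : Measure α} {f : α → ℝ}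

theorem measureReal_mul_abs_average_sub_le [IsFiniteMeasure μ] (hf : Integrable f μ) (c : ℝ) :
    μ.real Set.univ * |⨍ x, f x ∂μ - c| ≤ ∫ x, |f x - c| ∂μ := by
  have hmean : μ.real Set.univ * (⨍ x, f x ∂μ - c) = ∫ x, (f x - c) ∂μ := by
    rw [integral_sub hf (integrable_const c), integral_const, ← measure_smul_average,
      smul_eq_mul, smul_eq_mul, mul_sub]
  calc μ.real Set.univ * |⨍ x, f x ∂μ - c|
      = |∫ x, (f x - c) ∂μ| := by rw [← hmean, abs_mul, abs_of_nonneg measureReal_nonneg]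
    _ ≤ ∫ x, |f x - c| ∂μ := abs_integral_le_integral_abs

theorem integral_abs_sub_average_le [IsFiniteMeasure μ] (hf : Integrable f μ) (c : ℝ) :
    ∫ x, |f x - ⨍ y, f y ∂μ| ∂μ ≤ 2 * ∫ x, |f x - c| ∂μ := by
  set m := ⨍ y, f y ∂μ
  have hfc : Integrable (fun x => |f x - c|) μ := (hf.sub (integrable_const c)).abs
  calc ∫ x, |f x - m| ∂μ
      ≤ ∫ x, (|f x - c| + |m - c|) ∂μ := by
        refine integral_mono (hf.sub (integrable_const m)).abs (hfc.add (integrable_const _))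
          fun x => ?_
        simpa only [sub_sub_sub_cancel_right, abs_sub_comm m c] using abs_sub_le (f x) c m
    _ = ∫ x, |f x - c| ∂μ + μ.real Set.univ * |m - c| := by
        rw [integral_add hfc (integrable_const _), integral_const, smul_eq_mul]
    _ ≤ 2 * ∫ x, |f x - c| ∂μ := by
        linarith [measureReal_mul_abs_average_sub_le hf c]

theorem average_abs_sub_average_le [IsFiniteMeasure μ] (hf : Integrable f μ) (c : ℝ) :
    ⨍ x, |f x - ⨍ y, f y ∂μ| ∂μ ≤ 2 * ⨍ x, |f x - c| ∂μ := by
  rw [average_eq μ (fun x => |f x - _|), average_eq μ (fun x => |f x - c|),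
    smul_eq_mul, smul_eq_mul, mul_left_comm]
  exact mul_le_mul_of_nonneg_left (integral_abs_sub_average_le hf c)
    (inv_nonneg.2 measureReal_nonneg)

theorem setAverage_abs_sub_setAverage_le {s : Set α} (hs : μ s ≠ ⊤) (hf : IntegrableOn f s μ)
    (c : ℝ) : ⨍ x in s, |f x - ⨍ y in s, f y ∂μ| ∂μ ≤ 2 * ⨍ x in s, |f x - c| ∂μ :=
  have : IsFiniteMeasure (μ.restrict s) := isFiniteMeasure_restrict.2 hs
  average_abs_sub_average_le hf c

end MeanOscillation

theorem fmo_of_approximating_family_general (D : Set ℂ)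
    (z₀ : ℂ) (φ : ℂ → ℝ)
    (ε₀ : ℝ) (hε₀ : 0 < ε₀) (hball : Metric.ball z₀ ε₀ ⊆ D)
    (hint : IntegrableOn φ (Metric.ball z₀ ε₀))
    (φε : ℝ → ℝ) (C : ℝ)
    (hC : ∀ᶠ ε in 𝓝[>] (0 : ℝ), (⨍ w in Metric.ball z₀ ε, |φ w - φε ε|) ≤ C) :
    HasFiniteMeanOscillationAt D φ z₀ := by
  refine ⟨ε₀, hε₀, hball, hint, 2 * C, ?_⟩
  filter_upwards [hC, Ioc_mem_nhdsGT hε₀] with ε hεC hε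
  have hintε : IntegrableOn φ (Metric.ball z₀ ε) :=
    hint.mono_set (Metric.ball_subset_ball hε.2)
  calc ⨍ w in Metric.ball z₀ ε, |φ w - ⨍ u in Metric.ball z₀ ε, φ u|
      ≤ 2 * ⨍ w in Metric.ball z₀ ε, |φ w - φε ε| :=
        setAverage_abs_sub_setAverage_le measure_ball_lt_top.ne hintε (φε ε)
    _ ≤ 2 * C := by linarith

/-- If `φ` is integrable on some disk `B(z₀, ε₀) ⊆ D` and there is a collection of numbers
`φ_ε`, `ε ∈ (0, ε₀]`, with `limsup_{ε→0} ⨍_{B(z₀,ε)} |φ − φ_ε| dm < ∞`, then `φ` has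
finite mean oscillation at `z₀`. -/
theorem fmo_of_approximating_family (D : Set ℂ) (hD : IsOpen D) (hDconn : IsConnected D)
    (z₀ : ℂ) (hz₀ : z₀ ∈ D) (φ : ℂ → ℝ)
    (ε₀ : ℝ) (hε₀ : 0 < ε₀) (hball : Metric.ball z₀ ε₀ ⊆ D)
    (hint : IntegrableOn φ (Metric.ball z₀ ε₀))
    (φε : ℝ → ℝ) (C : ℝ)
    (hC : ∀ᶠ ε in 𝓝[>] (0 : ℝ), (⨍ w in Metric.ball z₀ ε, |φ w - φε ε|) ≤ C) :
    HasFiniteMeanOscillationAt D φ z₀ :=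
  fmo_of_approximating_family_general D z₀ φ ε₀ hε₀ hball hint φε C hC
end

section
/- Let D be a domain in ℂ, z₀ ∈ D, and let φ : D → ℝ be a non-negative function of finite mean oscillation at z₀. Then there exists ε₀ ∈ (0, δ₀), where δ₀ = min(e^{−e}, d₀) and d₀ = sup_{z∈D} |z − z₀|, such that ∫_{ε<|z−z₀|<ε₀} φ(z) / (|z − z₀| · log(1/|z − z₀|))² dm(z) = O(log log (1/ε)) as ε → 0; that is, there are constants C > 0 and ε₁ ∈ (0, ε₀) such that the integral is at most C · log log (1/ε) for all ε ∈ (0, ε₁). -/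
/-!
Dyadic chaining. Comparing the means of `φ` over `B(z₀, ρ/2)` and `B(z₀, ρ)` costs at most
`4` times the mean oscillation over `B(z₀, ρ)`, so the mean over `B(z₀, ε₀/2^k)` grows at most
linearly in `k`. On the shell `ε₀/2^(k+1) < |z - z₀| ≤ ε₀/2^k` the weight
`(|z - z₀| log(1/|z - z₀|))⁻²` is at most `(ε₀ 2^(-(k+1)) (k+1) log 2)⁻²`, while the shell has
area `O(4^(-k) ε₀²)`, so it contributes `O(1/(k+1))`. The annulus `ε < |z - z₀| < ε₀` meets
`O(log(1/ε))` shells, and the harmonic sum is `O(log log(1/ε))`.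
-/

open MeasureTheory Filter Topology

open Metric Set Real Module

theorem lintegral_biUnion_finset_le {α ι : Type*} [MeasurableSpace α] (μ : Measure α)
    (s : Finset ι) (t : ι → Set α) (f : α → ENNReal) :
    ∫⁻ x in ⋃ i ∈ s, t i, f x ∂μ ≤ ∑ i ∈ s, ∫⁻ x in t i, f x ∂μ :=
  calc ∫⁻ x in ⋃ i ∈ s, t i, f x ∂μ
      ≤ ∫⁻ x, f x ∂Measure.sum fun i : (s : Set ι) => μ.restrict (t i) :=
        lintegral_mono' (Measure.restrict_biUnion_le s.countable_toSet) le_rfl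
    _ = ∑ i ∈ s, ∫⁻ x in t i, f x ∂μ := by
        rw [lintegral_sum_measure]
        exact Finset.tsum_subtype s fun i => ∫⁻ x in t i, f x ∂μ

theorem setAverage_le_setAverage_add_mul_oscillation {α : Type*} [MeasurableSpace α]
    {μ : Measure α} {s t : Set α} {f : α → ℝ} {c : ℝ} (hst : s ⊆ t) (hs : μ s ≠ 0)
    (ht : μ t ≠ ⊤) (hμ : μ.real t ≤ c * μ.real s) (hf : IntegrableOn f t μ) :
    ⨍ x in s, f x ∂μ ≤ ⨍ x in t, f x ∂μ + c * ⨍ x in t, |f x - ⨍ y in t, f y ∂μ| ∂μ := by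
  set m := ⨍ y in t, f y ∂μ
  set I := ∫ x in t, |f x - m| ∂μ
  have hs_fin : μ s ≠ ⊤ := ne_top_of_le_ne_top ht (measure_mono hst)
  have hs_pos : 0 < μ.real s := ENNReal.toReal_pos hs hs_fin
  have ht_pos : 0 < μ.real t := hs_pos.trans_le (measureReal_mono hst ht)
  have hdev : IntegrableOn (fun x => f x - m) t μ := hf.sub (integrableOn_const ht)
  have hI : 0 ≤ I := setIntegral_nonneg_of_ae (ae_of_all _ fun _ => abs_nonneg _)
  have hs_dev : μ.real s * (⨍ x in s, f x ∂μ - m) ≤ I :=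
    calc μ.real s * (⨍ x in s, f x ∂μ - m) = ∫ x in s, (f x - m) ∂μ := by
          rw [integral_sub (hf.mono_set hst) (integrableOn_const hs_fin), setIntegral_const,
            ← measure_smul_setAverage _ hs_fin, smul_eq_mul, smul_eq_mul, mul_sub]
      _ ≤ ∫ x in s, |f x - m| ∂μ :=
          integral_mono (hdev.mono_set hst) (hdev.mono_set hst).abs fun _ => le_abs_self _
      _ ≤ I := setIntegral_mono_set hdev.abs (ae_of_all _ fun _ => abs_nonneg _)
          hst.eventuallyLE
  have hosc : ⨍ x in t, |f x - m| ∂μ = I / μ.real t := by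
    rw [setAverage_eq, smul_eq_mul, div_eq_inv_mul]
  have hmean_s : ⨍ x in s, f x ∂μ - m ≤ I / μ.real s := by
    rw [le_div_iff₀ hs_pos]; linarith
  have hratio : I / μ.real s ≤ c * (I / μ.real t) := by
    rw [mul_div_assoc', div_le_div_iff₀ hs_pos ht_pos]
    nlinarith [mul_le_mul_of_nonneg_left hμ hI]
  rw [hosc]
  linarith

section AddHaar

variable {E : Type*} [NormedAddCommGroup E] [NormedSpace ℝ E] [FiniteDimensional ℝ E]
  [MeasurableSpace E] [BorelSpace E] (μ : Measure E) [μ.IsAddHaarMeasure]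

theorem measureReal_ball_eq_two_pow_mul_half (x : E) {r : ℝ} (hr : 0 < r) :
    μ.real (ball x r) = 2 ^ finrank ℝ E * μ.real (ball x (r / 2)) := by
  simp only [measureReal_def, Measure.addHaar_ball_of_pos μ x hr,
    Measure.addHaar_ball_of_pos μ x (half_pos hr), ENNReal.toReal_mul]
  rw [ENNReal.toReal_ofReal (by positivity), ENNReal.toReal_ofReal (by positivity), div_pow]
  field_simp

theorem setAverage_ball_div_two_pow_le {f : E → ℝ} {x : E} {r C : ℝ} (hr : 0 < r)
    (hf : IntegrableOn f (ball x r) μ)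
    (hosc : ∀ ρ ∈ Ioc 0 r, ⨍ y in ball x ρ, |f y - ⨍ z in ball x ρ, f z ∂μ| ∂μ ≤ C) (k : ℕ) :
    ⨍ y in ball x (r / 2 ^ k), f y ∂μ ≤ ⨍ y in ball x r, f y ∂μ + 2 ^ finrank ℝ E * C * k := by
  induction k with
  | zero => simp
  | succ k ih =>
    have hρ : 0 < r / 2 ^ k := by positivity
    have hρr : r / 2 ^ k ≤ r := div_le_self hr.le (one_le_pow₀ one_le_two)
    have step := setAverage_le_setAverage_add_mul_oscillation
      (ball_subset_ball (half_le_self hρ.le)) (measure_ball_pos μ x (half_pos hρ)).ne'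
      measure_ball_lt_top.ne (measureReal_ball_eq_two_pow_mul_half μ x hρ).le
      (hf.mono_set (ball_subset_ball hρr))
    rw [div_div, ← pow_succ] at step
    have hosc_k := mul_le_mul_of_nonneg_left (hosc _ ⟨hρ, hρr⟩)
      (pow_nonneg zero_le_two (finrank ℝ E))
    push_cast
    linarith

theorem setLIntegral_ofReal_le_of_subset_closedBall {f : E → ℝ} {s : Set E} {x : E} {r : ℝ}
    (hr : 0 < r) (hs : s ⊆ closedBall x r) (hf : IntegrableOn f (ball x r) μ)
    (hf₀ : ∀ y ∈ ball x r, 0 ≤ f y) :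
    ∫⁻ y in s, ENNReal.ofReal (f y) ∂μ ≤
      ENNReal.ofReal (μ.real (ball x r) * ⨍ y in ball x r, f y ∂μ) := by
  have hs_ae : s ≤ᵐ[μ] ball x r := hs.eventuallyLE.trans <| ae_le_set.2 <| by
    rw [closedBall_sdiff_ball]; exact Measure.addHaar_sphere_of_ne_zero μ x hr.ne'
  rw [← smul_eq_mul, measure_smul_setAverage _ measure_ball_lt_top.ne,
    ofReal_integral_eq_lintegral_ofReal hf ((ae_restrict_iff' measurableSet_ball).2
      (ae_of_all _ hf₀))]
  exact lintegral_mono_set' hs_ae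

end AddHaar

theorem ofReal_lt_iSup_edist_of_ball_subset {E : Type*} [NormedAddCommGroup E]
    [NormedSpace ℝ E] [Nontrivial E] {D : Set E} {x : E} {ε ρ : ℝ} (hD : ball x ρ ⊆ D)
    (hε : 0 ≤ ε) (hερ : ε < ρ) : ENNReal.ofReal ε < ⨆ z ∈ D, edist z x := by
  obtain ⟨y, hy⟩ := exists_norm_eq E (c := (ε + ρ) / 2) (by linarith)
  have hmem : x + y ∈ D := hD <| by
    rw [mem_ball, dist_self_add_left, hy]; linarith
  calc ENNReal.ofReal ε < ENNReal.ofReal ((ε + ρ) / 2) :=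
        (ENNReal.ofReal_lt_ofReal_iff (by linarith)).2 (by linarith)
    _ = edist (x + y) x := by rw [edist_dist, dist_self_add_left, hy]
    _ ≤ ⨆ z ∈ D, edist z x := le_iSup₂_of_le (x + y) hmem le_rfl

def dyadicShell {X : Type*} [PseudoMetricSpace X] (x : X) (r : ℝ) (k : ℕ) : Set X :=
  {y | dist y x ∈ Ioc (r / 2 ^ (k + 1)) (r / 2 ^ k)}

theorem annulus_subset_biUnion_dyadicShell {X : Type*} [PseudoMetricSpace X] (x : X)
    {ε r : ℝ} (hε : 0 < ε) (hr : r ≤ 1) :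
    {y | ε < dist y x ∧ dist y x < r} ⊆
      ⋃ k ∈ Finset.range (⌊2 * log (1 / ε)⌋₊ + 1), dyadicShell x r k := by
  rintro y ⟨hεy, hyr⟩
  have hy : 0 < dist y x := hε.trans hεy
  obtain ⟨k, hk, hk'⟩ := exists_nat_pow_near ((one_le_div hy).2 hyr.le) one_lt_two
  have hr_lt : r / dist y x < 1 / ε :=
    (div_le_div_of_nonneg_right hr hy.le).trans_lt (one_div_lt_one_div_of_lt hε hεy)
  have hkL : k * log 2 < log (1 / ε) := by
    rw [← log_pow]
    exact log_lt_log (by positivity) (hk.trans_lt hr_lt)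
  refine mem_iUnion₂.2 ⟨k, Finset.mem_range.2 (Nat.lt_succ_of_le (Nat.le_floor ?_)), ?_, ?_⟩
  · nlinarith [log_two_gt_d9, (Nat.cast_nonneg k : (0 : ℝ) ≤ k)]
  · rwa [div_lt_comm₀ (by positivity) hy]
  · rwa [le_div_comm₀ hy (by positivity)]

theorem sum_range_floor_inv_le_four_mul_log {L : ℝ} (hL : exp 1 ≤ L) :
    ∑ k ∈ Finset.range (⌊2 * L⌋₊ + 1), ((k : ℝ) + 1)⁻¹ ≤ 4 * log L := by
  have hL₁ : 1 ≤ L := by linarith [add_one_le_exp 1]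
  have hlogL : 1 ≤ log L := by rw [← log_exp 1]; exact log_le_log (exp_pos 1) hL
  have hN : (⌊2 * L⌋₊ : ℝ) + 1 ≤ 3 * L := by
    linarith [Nat.floor_le (by positivity : 0 ≤ 2 * L)]
  calc ∑ k ∈ Finset.range (⌊2 * L⌋₊ + 1), ((k : ℝ) + 1)⁻¹
      = harmonic (⌊2 * L⌋₊ + 1) := by simp [harmonic]
    _ ≤ 1 + log (⌊2 * L⌋₊ + 1) := by exact_mod_cast harmonic_le_one_add_log _
    _ ≤ 1 + log (3 * L) := by gcongr
    _ = 1 + log 3 + log L := by rw [log_mul (by norm_num) (by positivity)]; ring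
    _ ≤ 4 * log L := by linarith [log_le_sub_one_of_pos (by norm_num : (0 : ℝ) < 3)]

theorem Complex.volume_real_ball (z : ℂ) {r : ℝ} (hr : 0 ≤ r) :
    volume.real (ball z r) = π * r ^ 2 := by
  simp [measureReal_def, Complex.volume_ball, ENNReal.toReal_ofReal hr, mul_comm]

theorem mul_log_two_le_dist_mul_log_inv_of_mem_dyadicShell {X : Type*} [PseudoMetricSpace X]
    {x y : X} {r : ℝ} {k : ℕ} (hr : 0 < r) (hr₂ : r ≤ 1 / 2) (hy : y ∈ dyadicShell x r k) :
    r / 2 ^ (k + 1) * ((k + 1) * log 2) ≤ dist y x * log (1 / dist y x) := by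
  obtain ⟨hlo, hhi⟩ := hy
  have hd : 0 < dist y x := lt_trans (by positivity) hlo
  have hlog : (k + 1) * log 2 ≤ log (1 / dist y x) := by
    rw [← Nat.cast_succ, ← log_pow]
    refine log_le_log (by positivity) ?_
    rw [le_one_div (by positivity) hd]
    calc dist y x ≤ r / 2 ^ k := hhi
      _ ≤ 1 / 2 / 2 ^ k := by gcongr
      _ = 1 / 2 ^ (k + 1) := by ring
  exact mul_le_mul hlo.le hlog (by positivity) hd.le

theorem lintegral_dyadicShell_le {φ : ℂ → ℝ} {z₀ : ℂ} {r : ℝ} (hr : 0 < r) (hr₂ : r ≤ 1 / 2)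
    (hφ : IntegrableOn φ (ball z₀ r)) (hφ₀ : ∀ z ∈ ball z₀ r, 0 ≤ φ z) (k : ℕ) :
    ∫⁻ z in dyadicShell z₀ r k, ENNReal.ofReal (φ z / (dist z z₀ * log (1 / dist z z₀)) ^ 2) ≤
      ENNReal.ofReal (4 * π / log 2 ^ 2 * (⨍ z in ball z₀ (r / 2 ^ k), φ z) / (k + 1) ^ 2) := by
  set ρ := r / 2 ^ k
  have hρ : 0 < ρ := by positivity
  have hρr : ρ ≤ r := div_le_self hr.le (one_le_pow₀ one_le_two)
  set b := r / 2 ^ (k + 1) * ((k + 1) * log 2)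
  have hb : 0 < b := by have := log_pos one_lt_two; positivity
  have hweight : ∀ z ∈ dyadicShell z₀ r k, b ≤ dist z z₀ * log (1 / dist z z₀) := fun z hz =>
    mul_log_two_le_dist_mul_log_inv_of_mem_dyadicShell hr hr₂ hz
  have hpoint : ∀ z ∈ dyadicShell z₀ r k,
      ENNReal.ofReal (φ z / (dist z z₀ * log (1 / dist z z₀)) ^ 2) ≤
        ENNReal.ofReal (φ z) * (ENNReal.ofReal (b ^ 2))⁻¹ := fun z hz => by
    rw [ENNReal.ofReal_div_of_pos (pow_pos (hb.trans_le (hweight z hz)) 2), div_eq_mul_inv]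
    gcongr
    exact hweight z hz
  have hshell : MeasurableSet (dyadicShell z₀ r k) :=
    (continuous_id.dist continuous_const).measurable measurableSet_Ioc
  calc ∫⁻ z in dyadicShell z₀ r k, ENNReal.ofReal (φ z / (dist z z₀ * log (1 / dist z z₀)) ^ 2)
      ≤ ∫⁻ z in dyadicShell z₀ r k, ENNReal.ofReal (φ z) * (ENNReal.ofReal (b ^ 2))⁻¹ :=
        setLIntegral_mono' hshell hpoint
    _ = (∫⁻ z in dyadicShell z₀ r k, ENNReal.ofReal (φ z)) * (ENNReal.ofReal (b ^ 2))⁻¹ :=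
        lintegral_mul_const' _ _ (ENNReal.inv_ne_top.2 (ENNReal.ofReal_pos.2 (by positivity)).ne')
    _ ≤ ENNReal.ofReal (volume.real (ball z₀ ρ) * ⨍ z in ball z₀ ρ, φ z) *
          (ENNReal.ofReal (b ^ 2))⁻¹ := by
        gcongr
        exact setLIntegral_ofReal_le_of_subset_closedBall volume hρ (fun z hz => hz.2)
          (hφ.mono_set (ball_subset_ball hρr)) fun z hz => hφ₀ z (ball_subset_ball hρr hz)
    _ = ENNReal.ofReal (4 * π / log 2 ^ 2 * (⨍ z in ball z₀ ρ, φ z) / (k + 1) ^ 2) := by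
        rw [← div_eq_mul_inv, ← ENNReal.ofReal_div_of_pos (by positivity),
          Complex.volume_real_ball z₀ hρ.le]
        congr 1
        simp only [ρ, b, pow_succ]
        field_simp
        ring

theorem exp_one_le_log_one_div {ε : ℝ} (hε : 0 < ε) (hεe : ε ≤ exp (-exp 1)) :
    exp 1 ≤ log (1 / ε) := by
  rwa [one_div, log_inv, le_neg, log_le_iff_le_exp hε]

theorem lintegral_annulus_le_of_lintegral_dyadicShell_le {X : Type*} [PseudoMetricSpace X]
    [MeasurableSpace X] {μ : Measure X} {g : X → ENNReal} {x : X} {r ε K : ℝ} (hK : 0 ≤ K)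
    (hr : r ≤ 1) (hε : 0 < ε) (hεe : ε ≤ exp (-exp 1))
    (hshell : ∀ k : ℕ, ∫⁻ y in dyadicShell x r k, g y ∂μ ≤ ENNReal.ofReal (K / (k + 1))) :
    ∫⁻ y in {y | ε < dist y x ∧ dist y x < r}, g y ∂μ ≤
      ENNReal.ofReal (4 * K * log (log (1 / ε))) := by
  have hL := exp_one_le_log_one_div hε hεe
  set L := log (1 / ε)
  calc ∫⁻ y in {y | ε < dist y x ∧ dist y x < r}, g y ∂μ
      ≤ ∫⁻ y in ⋃ k ∈ Finset.range (⌊2 * L⌋₊ + 1), dyadicShell x r k, g y ∂μ :=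
        lintegral_mono_set (annulus_subset_biUnion_dyadicShell x hε hr)
    _ ≤ ∑ k ∈ Finset.range (⌊2 * L⌋₊ + 1), ∫⁻ y in dyadicShell x r k, g y ∂μ :=
        lintegral_biUnion_finset_le _ _ _ _
    _ ≤ ∑ k ∈ Finset.range (⌊2 * L⌋₊ + 1), ENNReal.ofReal (K / (k + 1)) :=
        Finset.sum_le_sum fun k _ => hshell k
    _ = ENNReal.ofReal (K * ∑ k ∈ Finset.range (⌊2 * L⌋₊ + 1), ((k : ℝ) + 1)⁻¹) := by
        simp only [Finset.mul_sum, div_eq_mul_inv]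
        rw [ENNReal.ofReal_sum_of_nonneg fun k _ => by positivity]
    _ ≤ ENNReal.ofReal (4 * K * log L) := by
        apply ENNReal.ofReal_le_ofReal
        nlinarith [sum_range_floor_inv_le_four_mul_log hL]

theorem exists_lintegral_annulus_le_mul_log_log {φ : ℂ → ℝ} {z₀ : ℂ} {r C₀ : ℝ} (hr : 0 < r)
    (hre : r ≤ exp (-exp 1)) (hφ : IntegrableOn φ (ball z₀ r))
    (hφ₀ : ∀ z ∈ ball z₀ r, 0 ≤ φ z)
    (hosc : ∀ ρ ∈ Ioc 0 r, ⨍ w in ball z₀ ρ, |φ w - ⨍ u in ball z₀ ρ, φ u| ≤ C₀) :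
    ∃ C > 0, ∀ ε ∈ Ioo 0 r,
      ∫⁻ z in {z : ℂ | ε < dist z z₀ ∧ dist z z₀ < r},
          ENNReal.ofReal (φ z / (dist z z₀ * log (1 / dist z z₀)) ^ 2) ≤
        ENNReal.ofReal (C * log (log (1 / ε))) := by
  have hr₂ : r ≤ 1 / 2 := by
    refine hre.trans ?_
    rw [exp_neg, inv_le_comm₀ (exp_pos _) (by norm_num)]
    linarith [add_one_le_exp (exp 1), add_one_le_exp 1]
  have hA : 0 ≤ ⨍ z in ball z₀ r, φ z := by
    rw [setAverage_eq, smul_eq_mul]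
    exact mul_nonneg (by positivity) (setIntegral_nonneg measurableSet_ball hφ₀)
  have hC₀ : 0 ≤ C₀ := (integral_nonneg fun _ => abs_nonneg _).trans (hosc r ⟨hr, le_rfl⟩)
  set A := ⨍ z in ball z₀ r, φ z
  set K := 4 * π / log 2 ^ 2 * (A + 4 * C₀)
  have hK : 0 ≤ K := by positivity
  have hshell : ∀ k : ℕ, ∫⁻ z in dyadicShell z₀ r k,
      ENNReal.ofReal (φ z / (dist z z₀ * log (1 / dist z z₀)) ^ 2) ≤
        ENNReal.ofReal (K / (k + 1)) := fun k => by
    refine (lintegral_dyadicShell_le hr hr₂ hφ hφ₀ k).trans (ENNReal.ofReal_le_ofReal ?_)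
    have hmean := setAverage_ball_div_two_pow_le volume hr hφ hosc k
    rw [Complex.finrank_real_complex] at hmean
    have hmean' : ⨍ z in ball z₀ (r / 2 ^ k), φ z ≤ (A + 4 * C₀) * (k + 1) := by
      nlinarith [(Nat.cast_nonneg k : (0 : ℝ) ≤ k)]
    calc 4 * π / log 2 ^ 2 * (⨍ z in ball z₀ (r / 2 ^ k), φ z) / (k + 1) ^ 2
        ≤ 4 * π / log 2 ^ 2 * ((A + 4 * C₀) * (k + 1)) / (k + 1) ^ 2 := by gcongr
      _ = K / (k + 1) := by simp only [K]; field_simp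
  refine ⟨4 * K + 1, by positivity, fun ε hε => ?_⟩
  have hεe : ε ≤ exp (-exp 1) := hε.2.le.trans hre
  have hloglog : 0 ≤ log (log (1 / ε)) :=
    log_nonneg (by linarith [add_one_le_exp 1, exp_one_le_log_one_div hε.1 hεe])
  refine (lintegral_annulus_le_of_lintegral_dyadicShell_le hK (by linarith) hε.1 hεe
    hshell).trans (ENNReal.ofReal_le_ofReal ?_)
  gcongr
  linarith

theorem fmo_annulus_estimate_general (D : Set ℂ) (z₀ : ℂ) (φ : ℂ → ℝ)
    (hnonneg : ∀ z ∈ D, 0 ≤ φ z)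
    (hfmo : HasFiniteMeanOscillationAt D φ z₀) :
    ∃ ε₀ : ℝ, 0 < ε₀ ∧
      ENNReal.ofReal ε₀ <
        min (ENNReal.ofReal (Real.exp (-(Real.exp 1)))) (⨆ z ∈ D, edist z z₀) ∧
      ∃ C > (0 : ℝ), ∃ ε₁ ∈ Set.Ioo (0 : ℝ) ε₀, ∀ ε ∈ Set.Ioo (0 : ℝ) ε₁,
        (∫⁻ z in ({z : ℂ | ε < dist z z₀ ∧ dist z z₀ < ε₀} ∩ D),
            ENNReal.ofReal (φ z / (dist z z₀ * Real.log (1 / dist z z₀)) ^ 2)) ≤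
          ENNReal.ofReal (C * Real.log (Real.log (1 / ε))) := by
  obtain ⟨ε₂, hε₂, hball, hint, C₀, hev⟩ := hfmo
  obtain ⟨δ, hδ, hosc⟩ := mem_nhdsGT_iff_exists_Ioo_subset.1 hev
  obtain ⟨ε₀, hε₀, hε₀lt⟩ := exists_between (lt_min (lt_min hε₂ hδ) (exp_pos (-exp 1)))
  simp only [lt_min_iff] at hε₀lt
  obtain ⟨⟨hε₀₂, hε₀δ⟩, hε₀e⟩ := hε₀lt
  obtain ⟨C, hC, hest⟩ := exists_lintegral_annulus_le_mul_log_log hε₀ hε₀e.le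
    (hint.mono_set (ball_subset_ball hε₀₂.le))
    (fun z hz => hnonneg z (hball (ball_subset_ball hε₀₂.le hz)))
    (fun ρ hρ => hosc ⟨hρ.1, hρ.2.trans_lt hε₀δ⟩)
  refine ⟨ε₀, hε₀, lt_min ((ENNReal.ofReal_lt_ofReal_iff (exp_pos _)).2 hε₀e)
    (ofReal_lt_iSup_edist_of_ball_subset hball hε₀.le hε₀₂), C, hC, ε₀ / 2,
    ⟨half_pos hε₀, half_lt_self hε₀⟩, fun ε hε => (lintegral_mono_set inter_subset_left).trans
      (hest ε ⟨hε.1, hε.2.trans (half_lt_self hε₀)⟩)⟩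

/-- If `φ : D → ℝ` is non-negative and of finite mean oscillation at `z₀ ∈ D`, then there is
`ε₀ ∈ (0, δ₀)` with `δ₀ = min(e^{−e}, d₀)`, `d₀ = sup_{z ∈ D} |z − z₀|`, such that
`∫_{ε<|z−z₀|<ε₀} φ(z)/(|z−z₀|·log(1/|z−z₀|))² dm(z) = O(log log(1/ε))` as `ε → 0`. -/
theorem fmo_annulus_estimate (D : Set ℂ) (hD : IsOpen D) (hDconn : IsConnected D)
    (z₀ : ℂ) (hz₀ : z₀ ∈ D) (φ : ℂ → ℝ)
    (hnonneg : ∀ z ∈ D, 0 ≤ φ z)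
    (hfmo : HasFiniteMeanOscillationAt D φ z₀) :
    ∃ ε₀ : ℝ, 0 < ε₀ ∧
      ENNReal.ofReal ε₀ <
        min (ENNReal.ofReal (Real.exp (-(Real.exp 1)))) (⨆ z ∈ D, edist z z₀) ∧
      ∃ C > (0 : ℝ), ∃ ε₁ ∈ Set.Ioo (0 : ℝ) ε₀, ∀ ε ∈ Set.Ioo (0 : ℝ) ε₁,
        (∫⁻ z in ({z : ℂ | ε < dist z z₀ ∧ dist z z₀ < ε₀} ∩ D),
            ENNReal.ofReal (φ z / (dist z z₀ * Real.log (1 / dist z z₀)) ^ 2)) ≤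
          ENNReal.ofReal (C * Real.log (Real.log (1 / ε))) :=
  fmo_annulus_estimate_general D z₀ φ hnonneg hfmo
end

section
/- Let Q : 𝔻 → [0, ∞] be a measurable function on the unit disk 𝔻 = {z ∈ ℂ : |z| < 1} such that ∫_𝔻 Φ(Q(z)) dm(z) < ∞, where Φ : [0, ∞] → [0, ∞] is a non-decreasing convex function satisfying ∫_δ^∞ dτ/(τ·Φ⁻¹(τ)) = ∞ for some δ > Φ(0). Then ∫_0^1 dr/(r·q(r)) = ∞, where q(r) = (1/(2π)) ∫_0^{2π} Q(r·e^{iθ}) dθ is the average of Q over the circle |z| = r. -/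
open MeasureTheory ENNReal NNReal

/-- The generalized inverse `Φ⁻¹(τ) = inf {t : Φ(t) ≥ τ}` of a non-decreasing function
`Φ : [0,∞] → [0,∞]` (with `inf ∅ = ∞`). -/
noncomputable def PhiInv (Φ : ℝ≥0∞ → ℝ≥0∞) (τ : ℝ≥0∞) : ℝ≥0∞ :=
  sInf {t : ℝ≥0∞ | τ ≤ Φ t}

/-!
Jensen's inequality on the circle of radius `r` gives `Φ(q(r)) ≤ p(r)`, where `p(r)` is the circle
average of `Φ ∘ Q`, so `q(r) ≤ Φ⁻¹(δ / r²)` wherever `p(r) < δ / r²`. On the other radii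
`1 / (r Φ⁻¹(δ / r²)) ≤ r p(r) / (δ Φ⁻¹(δ))`, which is integrable because
`∫₀¹ r p(r) dr = (2π)⁻¹ ∫_𝔻 Φ ∘ Q` (polar coordinates). Since the substitution `τ = δ / r²` turns
`∫₀¹ dr / (r Φ⁻¹(δ / r²))` into half of `∫_δ^∞ dτ / (τ Φ⁻¹(τ)) = ∞`, the integral of
`1 / (r q(r))` diverges. Convexity gives `Φ⁻¹(δ) > 0` unless `Φ = ∞` on `(0, ∞]`, and in that
case `Q = 0` almost everywhere.
-/

open Set Real

section Jensen

variable {Φ : ℝ≥0∞ → ℝ≥0∞}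

theorem ConvexOn.ennreal_map_sum_le (hΦ : ConvexOn ℝ≥0 univ Φ) {ι : Type*} (t : Finset ι)
    (w : ι → ℝ≥0) (p : ι → ℝ≥0∞) (hw : ∑ i ∈ t, w i = 1) :
    Φ (∑ i ∈ t, w i • p i) ≤ ∑ i ∈ t, w i • Φ (p i) := by
  classical
  induction t using Finset.induction generalizing w with
  | empty => simp at hw
  | @insert j t hj ih =>
    rw [Finset.sum_insert hj] at hw ⊢
    rw [Finset.sum_insert hj]
    set b := ∑ i ∈ t, w i
    by_cases hb : b = 0
    · have hzero : ∀ i ∈ t, w i = 0 := Finset.sum_eq_zero_iff.mp hb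
      have hwj : w j = 1 := by simpa [hb] using hw
      have hvanish : ∀ g : ι → ℝ≥0∞, ∑ i ∈ t, w i • g i = 0 :=
        fun g => Finset.sum_eq_zero fun i hi => by simp [hzero i hi]
      simp [hvanish, hwj]
    have hrescale : ∀ g : ι → ℝ≥0∞, b • ∑ i ∈ t, (w i / b) • g i = ∑ i ∈ t, w i • g i := by
      intro g
      simp_rw [Finset.smul_sum, smul_smul, mul_div_cancel₀ _ hb]
    have ih' := ih (fun i => w i / b) (by rw [← Finset.sum_div, div_self hb])
    calc Φ (w j • p j + ∑ i ∈ t, w i • p i)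
        = Φ (w j • p j + b • ∑ i ∈ t, (w i / b) • p i) := by rw [hrescale]
      _ ≤ w j • Φ (p j) + b • Φ (∑ i ∈ t, (w i / b) • p i) :=
          hΦ.2 (mem_univ _) (mem_univ _) zero_le zero_le hw
      _ ≤ w j • Φ (p j) + b • ∑ i ∈ t, (w i / b) • Φ (p i) := by gcongr
      _ = w j • Φ (p j) + ∑ i ∈ t, w i • Φ (p i) := by rw [hrescale]

theorem ConvexOn.map_lintegral_simpleFunc_le (hΦ : ConvexOn ℝ≥0 univ Φ) {α : Type*}
    [MeasurableSpace α] (μ : Measure α) [IsProbabilityMeasure μ] (g : SimpleFunc α ℝ≥0∞) :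
    Φ (g.lintegral μ) ≤ (g.map Φ).lintegral μ := by
  set w : ℝ≥0∞ → ℝ≥0 := fun y => (μ (g ⁻¹' {y})).toNNReal
  have hw : ∀ y, (w y : ℝ≥0∞) = μ (g ⁻¹' {y}) := fun y => coe_toNNReal (measure_ne_top μ _)
  have hw_sum : ∑ y ∈ g.range, w y = 1 := by
    have h := g.sum_range_measure_preimage_singleton μ
    rw [measure_univ, ← funext hw, ← ENNReal.ofNNReal_finsetSum] at h
    exact_mod_cast h
  have := hΦ.ennreal_map_sum_le g.range w id hw_sum
  simp only [ENNReal.smul_def, smul_eq_mul, hw, id] at this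
  rw [SimpleFunc.map_lintegral, SimpleFunc.lintegral]
  simpa only [mul_comm] using this

theorem ConvexOn.map_le_lintegral_comp_of_lt_lintegral (hΦ : ConvexOn ℝ≥0 univ Φ)
    (hΦmono : Monotone Φ) {α : Type*} [MeasurableSpace α] (μ : Measure α) [IsProbabilityMeasure μ]
    {f : α → ℝ≥0∞} (hf : Measurable f) {s : ℝ≥0∞} (hs : s < ∫⁻ a, f a ∂μ) :
    Φ s ≤ ∫⁻ a, Φ (f a) ∂μ := by
  rw [lintegral_eq_iSup_eapprox_lintegral hf] at hs
  obtain ⟨n, hn⟩ := lt_iSup_iff.mp hs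
  set g := SimpleFunc.eapprox f n
  calc Φ s ≤ Φ (g.lintegral μ) := hΦmono hn.le
    _ ≤ (g.map Φ).lintegral μ := hΦ.map_lintegral_simpleFunc_le μ g
    _ = ∫⁻ a, Φ (g a) ∂μ := (SimpleFunc.lintegral_eq_lintegral _ μ).symm
    _ ≤ ∫⁻ a, Φ (f a) ∂μ := lintegral_mono fun a => hΦmono <|
          SimpleFunc.iSup_eapprox_apply hf a ▸ le_iSup (fun k => SimpleFunc.eapprox f k a) n

end Jensen

section PhiInv

variable {Φ : ℝ≥0∞ → ℝ≥0∞}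

theorem PhiInv_mono (Φ : ℝ≥0∞ → ℝ≥0∞) : Monotone (PhiInv Φ) :=
  fun _ _ hστ => sInf_le_sInf fun _ ht => hστ.trans ht

theorem le_PhiInv_of_lt (hΦmono : Monotone Φ) {s τ : ℝ≥0∞} (hs : Φ s < τ) : s ≤ PhiInv Φ τ :=
  le_sInf fun _ ht => le_of_not_gt fun hts => (hs.trans_le ht).not_ge (hΦmono hts.le)

theorem PhiInv_top_eq_zero (hΦ : ∀ t ≠ 0, Φ t = ⊤) : PhiInv Φ ⊤ = 0 :=
  sInf_eq_bot.2 fun _ hb =>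
    let ⟨a, ha, hab⟩ := exists_between hb
    ⟨a, (hΦ a ha.ne').ge, hab⟩

theorem ConvexOn.exists_ne_zero_lt (hΦ : ConvexOn ℝ≥0 univ Φ) {τ t : ℝ≥0∞} (hτ : Φ 0 < τ)
    (ht : t ≠ 0) (hΦt : Φ t ≠ ⊤) : ∃ s ≠ 0, Φ s < τ := by
  obtain ⟨n, hn, hnΦ⟩ := exists_nnreal_pos_mul_lt hΦt (tsub_pos_of_lt hτ).ne'
  set b := min n 1
  have hb : b ≠ 0 := (lt_min hn one_pos).ne'
  refine ⟨b • t, smul_ne_zero hb ht, ?_⟩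
  calc Φ (b • t) = Φ ((1 - b) • 0 + b • t) := by rw [smul_zero, zero_add]
    _ ≤ (1 - b) • Φ 0 + b • Φ t :=
        hΦ.2 (mem_univ _) (mem_univ _) zero_le zero_le (tsub_add_cancel_of_le (min_le_right _ _))
    _ ≤ Φ 0 + (n : ℝ≥0∞) * Φ t := by
        rw [ENNReal.smul_def, ENNReal.smul_def, smul_eq_mul, smul_eq_mul]
        gcongr
        · exact mul_le_of_le_one_left zero_le (by exact_mod_cast tsub_le_self)
        · exact_mod_cast min_le_left _ _
    _ < Φ 0 + (τ - Φ 0) := ENNReal.add_lt_add_left (hτ.trans_le le_top).ne hnΦ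
    _ = τ := add_tsub_cancel_of_le hτ.le

theorem ConvexOn.PhiInv_pos (hΦ : ConvexOn ℝ≥0 univ Φ) (hΦmono : Monotone Φ) {τ t : ℝ≥0∞}
    (hτ : Φ 0 < τ) (ht : t ≠ 0) (hΦt : Φ t ≠ ⊤) : 0 < PhiInv Φ τ :=
  let ⟨_, hs, hΦs⟩ := hΦ.exists_ne_zero_lt hτ ht hΦt
  (pos_iff_ne_zero.2 hs).trans_le (le_PhiInv_of_lt hΦmono hΦs)

theorem ConvexOn.lintegral_le_PhiInv (hΦ : ConvexOn ℝ≥0 univ Φ) (hΦmono : Monotone Φ)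
    {α : Type*} [MeasurableSpace α] (μ : Measure α) [IsProbabilityMeasure μ]
    {f : α → ℝ≥0∞} (hf : Measurable f) {τ : ℝ≥0∞} (hτ : ∫⁻ a, Φ (f a) ∂μ < τ) :
    ∫⁻ a, f a ∂μ ≤ PhiInv Φ τ :=
  le_sInf fun _ ht => le_of_not_gt fun hlt =>
    ((hΦ.map_le_lintegral_comp_of_lt_lintegral hΦmono μ hf hlt).trans_lt hτ).not_ge ht

open ProbabilityTheory in
theorem ConvexOn.setLIntegral_div_le_PhiInv (hΦ : ConvexOn ℝ≥0 univ Φ) (hΦmono : Monotone Φ)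
    {α : Type*} [MeasurableSpace α] {μ : Measure α} {s : Set α} (hs₀ : μ s ≠ 0) (hs : μ s ≠ ⊤)
    {f : α → ℝ≥0∞} (hf : Measurable f) {τ : ℝ≥0∞} (hτ : (∫⁻ a in s, Φ (f a) ∂μ) / μ s < τ) :
    (∫⁻ a in s, f a ∂μ) / μ s ≤ PhiInv Φ τ := by
  have := cond_isProbabilityMeasure_of_finite hs₀ hs
  have hcond : ∀ g : α → ℝ≥0∞, ∫⁻ a, g a ∂μ[|s] = (∫⁻ a in s, g a ∂μ) / μ s := fun g => by
    rw [ProbabilityTheory.cond, lintegral_smul_measure, smul_eq_mul, ENNReal.div_eq_inv_mul]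
  simpa only [hcond] using hΦ.lintegral_le_PhiInv hΦmono μ[|s] hf (by rwa [hcond])

end PhiInv

theorem Function.Periodic.setLIntegral_Ioo_eq {f : ℝ → ℝ≥0∞} {T : ℝ} (hf : Function.Periodic f T)
    (hT : 0 < T) (s t : ℝ) : ∫⁻ x in Ioo s (s + T), f x = ∫⁻ x in Ioo t (t + T), f x := by
  have := Fact.mk hT
  have hcircle : ∀ a, ∫⁻ x in Ioo a (a + T), f x = ∫⁻ y : AddCircle T, hf.lift y := fun a => by
    rw [setLIntegral_congr Ioo_ae_eq_Ioc, ← AddCircle.lintegral_preimage (T := T) a]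
    rfl
  rw [hcircle, hcircle]

theorem Complex.polarCoord_symm_eq_circleMap (p : ℝ × ℝ) :
    Complex.polarCoord.symm p = circleMap 0 p.1 p.2 := by
  rw [Complex.polarCoord_symm_apply, circleMap_zero, Complex.exp_mul_I]
  push_cast
  ring

theorem lintegral_ball_eq_lintegral_circleMap {f : ℂ → ℝ≥0∞} (hf : Measurable f) (R : ℝ) :
    ∫⁻ z in Metric.ball 0 R, f z =
      ∫⁻ r in Ioo 0 R, ENNReal.ofReal r * ∫⁻ θ in Ioo 0 (2 * π), f (circleMap 0 r θ) := by
  set g : ℝ × ℝ → ℝ≥0∞ := fun p => ENNReal.ofReal p.1 * f (circleMap 0 p.1 p.2)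
  have hg : Measurable g :=
    (ENNReal.measurable_ofReal.comp measurable_fst).mul (hf.comp circleMap.continuous.measurable)
  have hS : MeasurableSet (Ioo 0 R ×ˢ univ : Set (ℝ × ℝ)) := measurableSet_Ioo.prod .univ
  have hindicator : ∀ p ∈ polarCoord.target,
      ENNReal.ofReal p.1 • (Metric.ball 0 R).indicator f (Complex.polarCoord.symm p) =
        (Ioo 0 R ×ˢ univ).indicator g p := by
    rintro ⟨r, θ⟩ ⟨hr, -⟩
    have hr : 0 < r := hr
    rw [Complex.polarCoord_symm_eq_circleMap]
    simp [g, indicator, abs_of_pos hr, hr]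
  have htarget : polarCoord.target ∩ Ioo 0 R ×ˢ univ = Ioo 0 R ×ˢ Ioo (-π) π := by
    rw [polarCoord_target, prod_inter_prod, Ioi_inter_Ioo, max_self, inter_univ]
  rw [← lintegral_indicator measurableSet_ball, ← Complex.lintegral_comp_polarCoord_symm,
    setLIntegral_congr_fun polarCoord.open_target.measurableSet hindicator,
    lintegral_indicator hS, Measure.restrict_restrict hS, inter_comm, htarget,
    Measure.volume_eq_prod, ← Measure.prod_restrict, lintegral_prod _ hg.aemeasurable]
  refine lintegral_congr fun r => ?_
  simp only [g]
  rw [lintegral_const_mul _ (f := fun θ => f (circleMap 0 r θ))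
    (hf.comp (continuous_circleMap 0 r).measurable)]
  congr 1
  have := (periodic_circleMap (0 : ℂ) r).comp f |>.setLIntegral_Ioo_eq two_pi_pos (-π) 0
  rwa [show -π + 2 * π = π by ring, zero_add] at this

theorem lintegral_Ioi_inv_mul_eq_two_mul_lintegral_Ioo {δ : ℝ} (hδ : 0 < δ) (g : ℝ → ℝ≥0∞) :
    ∫⁻ τ in Ioi δ, (ENNReal.ofReal τ * g τ)⁻¹ =
      2 * ∫⁻ r in Ioo 0 1, (ENNReal.ofReal r * g (δ / r ^ 2))⁻¹ := by
  have himage : (fun r : ℝ => δ / r ^ 2) '' Ioo 0 1 = Ioi δ := by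
    ext τ
    constructor
    · rintro ⟨r, ⟨hr₀, hr₁⟩, rfl⟩
      show δ < δ / r ^ 2
      rw [lt_div_iff₀ (by positivity)]
      have : r ^ 2 < 1 := by nlinarith
      nlinarith
    · intro (hτ : δ < τ)
      have hτ₀ : 0 < δ / τ := div_pos hδ (hδ.trans hτ)
      refine ⟨√(δ / τ), ⟨sqrt_pos.2 hτ₀, ?_⟩, ?_⟩
      · exact (sqrt_lt' one_pos).2 (by rw [one_pow, div_lt_one (hδ.trans hτ)]; exact hτ)
      · simp only [sq_sqrt hτ₀.le]
        field_simp
  have hderiv : ∀ r ∈ Ioo (0 : ℝ) 1,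
      HasDerivWithinAt (fun r : ℝ => δ / r ^ 2) (-(2 * δ) / r ^ 3) (Ioo 0 1) r := by
    intro r hr
    have h := (hasDerivAt_const r δ).div (hasDerivAt_pow 2 r) (pow_ne_zero 2 hr.1.ne')
    refine (h.congr_deriv ?_).hasDerivWithinAt
    have : r ≠ 0 := hr.1.ne'
    field_simp
    ring
  have hinj : InjOn (fun r : ℝ => δ / r ^ 2) (Ioo 0 1) := by
    intro a ha b hb hab
    rw [div_eq_div_iff (by positivity [ha.1]) (by positivity [hb.1])] at hab
    exact (pow_left_inj₀ ha.1.le hb.1.le two_ne_zero).1 (mul_left_cancel₀ hδ.ne' hab).symm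
  rw [← himage, lintegral_image_eq_lintegral_abs_deriv_mul measurableSet_Ioo hderiv hinj,
    ← lintegral_const_mul' _ _ ofNat_ne_top]
  refine setLIntegral_congr_fun measurableSet_Ioo fun r ⟨hr₀, _⟩ => ?_
  set a := ENNReal.ofReal (δ / r ^ 2)
  have ha₀ : a ≠ 0 := ENNReal.ofReal_pos.2 (by positivity) |>.ne'
  have hr : ENNReal.ofReal r ≠ 0 := ENNReal.ofReal_pos.2 hr₀ |>.ne'
  have hderiv_eq : ENNReal.ofReal |-(2 * δ) / r ^ 3| = 2 * a * (ENNReal.ofReal r)⁻¹ := by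
    rw [abs_div, abs_neg, abs_of_pos (by positivity), abs_of_pos (by positivity),
      ← ENNReal.ofReal_inv_of_pos hr₀, ← ENNReal.ofReal_ofNat 2, ← ENNReal.ofReal_mul zero_le_two,
      ← ENNReal.ofReal_mul (by positivity)]
    congr 1
    field_simp
  rw [hderiv_eq, ENNReal.mul_inv (.inl ha₀) (.inl ofReal_ne_top),
    ENNReal.mul_inv (.inl hr) (.inl ofReal_ne_top)]
  calc 2 * a * (ENNReal.ofReal r)⁻¹ * (a⁻¹ * (g (δ / r ^ 2))⁻¹)
      = 2 * (a * a⁻¹) * ((ENNReal.ofReal r)⁻¹ * (g (δ / r ^ 2))⁻¹) := by ring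
    _ = _ := by rw [ENNReal.mul_inv_cancel ha₀ ofReal_ne_top, mul_one]

section Divergence

variable {Φ : ℝ≥0∞ → ℝ≥0∞} {q P : ℝ → ℝ≥0∞}

theorem inv_mul_PhiInv_div_sq_le {δ r : ℝ} (hδ : 0 < δ) (hr : r ∈ Ioo 0 1) {x y : ℝ≥0∞}
    (hxy : y < ENNReal.ofReal (δ / r ^ 2) → x ≤ PhiInv Φ (ENNReal.ofReal (δ / r ^ 2))) :
    (ENNReal.ofReal r * PhiInv Φ (ENNReal.ofReal (δ / r ^ 2)))⁻¹ ≤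
      (ENNReal.ofReal r * x)⁻¹ + (ENNReal.ofReal δ * PhiInv Φ (ENNReal.ofReal δ))⁻¹ *
        (ENNReal.ofReal r * y) := by
  have hr₀ : ENNReal.ofReal r ≠ 0 := (ofReal_pos.2 hr.1).ne'
  have hδ₀ : ENNReal.ofReal δ ≠ 0 := (ofReal_pos.2 hδ).ne'
  by_cases hy : y < ENNReal.ofReal (δ / r ^ 2)
  · exact le_add_right (ENNReal.inv_le_inv.2 (by gcongr; exact hxy hy))
  have hδr : δ ≤ δ / r ^ 2 := by
    rw [le_div_iff₀ (pow_pos hr.1 2)]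
    have : r ^ 2 < 1 := by nlinarith [hr.1, hr.2]
    nlinarith
  have hK_eq : (ENNReal.ofReal r * PhiInv Φ (ENNReal.ofReal δ))⁻¹ =
      (ENNReal.ofReal δ * PhiInv Φ (ENNReal.ofReal δ))⁻¹ *
        (ENNReal.ofReal r * ENNReal.ofReal (δ / r ^ 2)) := by
    rw [← ENNReal.ofReal_mul hr.1.le, show r * (δ / r ^ 2) = δ / r by field_simp,
      ENNReal.ofReal_div_of_pos hr.1, ENNReal.mul_inv (.inl hr₀) (.inl ofReal_ne_top),
      ENNReal.div_eq_inv_mul, ENNReal.mul_inv (.inl hδ₀) (.inl ofReal_ne_top)]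
    calc _ = (ENNReal.ofReal δ * (ENNReal.ofReal δ)⁻¹) *
          ((ENNReal.ofReal r)⁻¹ * (PhiInv Φ (ENNReal.ofReal δ))⁻¹) := by
          rw [ENNReal.mul_inv_cancel hδ₀ ofReal_ne_top, one_mul]
      _ = _ := by ring
  refine le_add_left ?_
  calc (ENNReal.ofReal r * PhiInv Φ (ENNReal.ofReal (δ / r ^ 2)))⁻¹
      ≤ (ENNReal.ofReal r * PhiInv Φ (ENNReal.ofReal δ))⁻¹ :=
        ENNReal.inv_le_inv.2 (by gcongr; exact PhiInv_mono Φ (ofReal_le_ofReal hδr))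
    _ ≤ _ := by
        rw [hK_eq]
        gcongr
        exact not_lt.1 hy

theorem lintegral_inv_mul_eq_top_of_forall_ne_zero_eq_top (hΦ : ∀ t ≠ 0, Φ t = ⊤)
    (hP : Measurable P) (hPint : ∫⁻ r in Ioo 0 1, ENNReal.ofReal r * P r ≠ ⊤)
    (hqP : ∀ r ∈ Ioo (0 : ℝ) 1, ∀ τ, P r < τ → q r ≤ PhiInv Φ τ) :
    ∫⁻ r in Ioo 0 1, (ENNReal.ofReal r * q r)⁻¹ = ⊤ := by
  have hae : ∀ᵐ r ∂volume.restrict (Ioo (0 : ℝ) 1), (ENNReal.ofReal r * q r)⁻¹ = ⊤ := by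
    filter_upwards [ae_lt_top (by fun_prop) hPint, ae_restrict_mem measurableSet_Ioo]
      with r hr hr₁
    have hPr : P r < ⊤ := lt_top_of_mul_ne_top_right hr.ne (ofReal_pos.2 hr₁.1).ne'
    have hqr : q r = 0 := nonpos_iff_eq_zero.1 <| (PhiInv_top_eq_zero hΦ) ▸ hqP r hr₁ ⊤ hPr
    rw [hqr, mul_zero, inv_zero]
  simp [lintegral_congr_ae hae]

theorem lintegral_inv_mul_eq_top_of_PhiInv_ne_zero {δ : ℝ} (hδ : 0 < δ)
    (hε : PhiInv Φ (ENNReal.ofReal δ) ≠ 0)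
    (hdiv : ∫⁻ τ in Ioi δ, (ENNReal.ofReal τ * PhiInv Φ (ENNReal.ofReal τ))⁻¹ = ⊤)
    (hP : Measurable P) (hPint : ∫⁻ r in Ioo 0 1, ENNReal.ofReal r * P r ≠ ⊤)
    (hqP : ∀ r ∈ Ioo (0 : ℝ) 1, ∀ τ, P r < τ → q r ≤ PhiInv Φ τ) :
    ∫⁻ r in Ioo 0 1, (ENNReal.ofReal r * q r)⁻¹ = ⊤ := by
  set K := (ENNReal.ofReal δ * PhiInv Φ (ENNReal.ofReal δ))⁻¹
  have hK : K ≠ ⊤ := inv_ne_top.2 (mul_ne_zero (ofReal_pos.2 hδ).ne' hε)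
  have hcompare : ∫⁻ r in Ioo 0 1, (ENNReal.ofReal r * PhiInv Φ (ENNReal.ofReal (δ / r ^ 2)))⁻¹
      = ⊤ := by
    have h := lintegral_Ioi_inv_mul_eq_two_mul_lintegral_Ioo hδ fun τ => PhiInv Φ (ENNReal.ofReal τ)
    rw [hdiv] at h
    exact (ENNReal.mul_eq_top.1 h.symm).elim (·.2) fun h => absurd h.1 ofNat_ne_top
  by_contra hne
  refine add_ne_top.2 ⟨hne, mul_ne_top hK hPint⟩ (top_unique ?_)
  calc ⊤ = ∫⁻ r in Ioo 0 1, (ENNReal.ofReal r * PhiInv Φ (ENNReal.ofReal (δ / r ^ 2)))⁻¹ :=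
        hcompare.symm
    _ ≤ ∫⁻ r in Ioo 0 1, (ENNReal.ofReal r * q r)⁻¹ + K * (ENNReal.ofReal r * P r) :=
        setLIntegral_mono' measurableSet_Ioo fun r hr =>
          inv_mul_PhiInv_div_sq_le hδ hr (hqP r hr _)
    _ = _ := by rw [lintegral_add_right _ (by fun_prop), lintegral_const_mul _ (by fun_prop)]

theorem ConvexOn.lintegral_inv_mul_eq_top (hΦ : ConvexOn ℝ≥0 univ Φ) (hΦmono : Monotone Φ)
    {δ : ℝ} (hδ : Φ 0 < ENNReal.ofReal δ)
    (hdiv : ∫⁻ τ in Ioi δ, (ENNReal.ofReal τ * PhiInv Φ (ENNReal.ofReal τ))⁻¹ = ⊤)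
    (hP : Measurable P) (hPint : ∫⁻ r in Ioo 0 1, ENNReal.ofReal r * P r ≠ ⊤)
    (hqP : ∀ r ∈ Ioo (0 : ℝ) 1, ∀ τ, P r < τ → q r ≤ PhiInv Φ τ) :
    ∫⁻ r in Ioo 0 1, (ENNReal.ofReal r * q r)⁻¹ = ⊤ := by
  by_cases hdeg : ∀ t ≠ 0, Φ t = ⊤
  · exact lintegral_inv_mul_eq_top_of_forall_ne_zero_eq_top hdeg hP hPint hqP
  simp only [not_forall] at hdeg
  obtain ⟨t, ht, hΦt⟩ := hdeg
  exact lintegral_inv_mul_eq_top_of_PhiInv_ne_zero (ofReal_pos.1 (pos_of_gt hδ))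
    (hΦ.PhiInv_pos hΦmono hδ ht hΦt).ne' hdiv hP hPint hqP

end Divergence

/-- Let `Q : 𝔻 → [0,∞]` be measurable with `∫_𝔻 Φ(Q) dm < ∞` for a non-decreasing convex
function `Φ : [0,∞] → [0,∞]` satisfying `∫_δ^∞ dτ/(τ·Φ⁻¹(τ)) = ∞` for some `δ > Φ(0)`.
Then `∫_0^1 dr/(r·q(r)) = ∞`, where `q(r)` is the average of `Q` over the circle `|z| = r`. -/
theorem divergence_of_circle_averages (Q : ℂ → ℝ≥0∞) (hQ : Measurable Q)
    (Φ : ℝ≥0∞ → ℝ≥0∞) (hΦmono : Monotone Φ)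
    (hΦconv : ∀ x y : ℝ≥0∞, ∀ a b : ℝ≥0, a + b = 1 →
      Φ (a • x + b • y) ≤ a • Φ x + b • Φ y)
    (hint : (∫⁻ z in Metric.ball (0 : ℂ) 1, Φ (Q z)) < ⊤)
    (δ : ℝ) (hδ : Φ 0 < ENNReal.ofReal δ)
    (hdiv : (∫⁻ τ in Set.Ioi δ,
        (ENNReal.ofReal τ * PhiInv Φ (ENNReal.ofReal τ))⁻¹) = ⊤) :
    (∫⁻ r in Set.Ioo (0 : ℝ) 1,
        (ENNReal.ofReal r *
          ((∫⁻ θ in Set.Ioo (0 : ℝ) (2 * Real.pi),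
              Q ((r : ℂ) * Complex.exp ((θ : ℂ) * Complex.I))) /
            ENNReal.ofReal (2 * Real.pi)))⁻¹) = ⊤ := by
  have hΦ : ConvexOn ℝ≥0 univ Φ := ⟨convex_univ, fun x _ y _ a b _ _ hab => hΦconv x y a b hab⟩
  have hQΦ : Measurable (Φ ∘ Q) := hΦmono.measurable.comp hQ
  have hvol : volume (Ioo 0 (2 * π)) = ENNReal.ofReal (2 * π) := by rw [volume_Ioo, sub_zero]
  have hvol₀ : volume (Ioo 0 (2 * π)) ≠ 0 := ((Measure.measure_Ioo_pos volume).2 two_pi_pos).ne'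
  simp_rw [← circleMap_zero, ← hvol]
  rw [lintegral_ball_eq_lintegral_circleMap (f := fun z => Φ (Q z)) hQΦ] at hint
  refine hΦ.lintegral_inv_mul_eq_top hΦmono hδ hdiv
    (P := fun r => (∫⁻ θ in Ioo 0 (2 * π), Φ (Q (circleMap 0 r θ))) / volume (Ioo 0 (2 * π)))
    ?_ ?_ fun r _ τ hτ => ?_
  · exact (Measurable.lintegral_prod_right' (hQΦ.comp circleMap.continuous.measurable)).div_const _
  · simp_rw [div_eq_mul_inv, ← mul_assoc]
    rw [lintegral_mul_const' _ _ (inv_ne_top.2 hvol₀)]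
    exact mul_ne_top hint.ne (inv_ne_top.2 hvol₀)
  · exact hΦ.setLIntegral_div_le_PhiInv hΦmono hvol₀ measure_Ioo_lt_top.ne
      (hQ.comp (continuous_circleMap 0 r).measurable) hτ
end

section
/- Let (X, μ) be a measure space with finite total measure, let p ∈ (1, ∞), and let φ : X → (0, ∞) be a measurable function. Define I(φ, p) = inf ∫_X φ·α^p dμ, the infimum taken over all measurable functions α : X → [0, ∞] with ∫_X α dμ = 1. Then I(φ, p) = ( ∫_X φ^{−λ} dμ )^{−1/λ}, where λ = 1/(p − 1). -/
open MeasureTheory ENNReal NNReal Filter Topology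

/-! Hölder's inequality with the exponents `p` and `q = p λ`, applied to
`α = (φ ^ (1/p) α) · φ ^ (-1/p)`, gives `1 ≤ (∫ φ α ^ p) ^ (1/p) (∫ φ ^ (-λ)) ^ (1/q)`, which is
the lower bound. Equality holds for `α` proportional to `φ ^ (-λ)`; since `∫ φ ^ (-λ)` may be
infinite, the upper bound uses the normalized truncations of `φ ^ (-λ)` to `{φ ^ (-λ) ≤ n}`
and passes to the limit. -/

theorem ENNReal.mul_rpow_rpow_neg_eq {x : ℝ≥0∞} (hx₀ : x ≠ 0) (hx : x ≠ ⊤) {p lam : ℝ}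
    (hpl : lam * (p - 1) = 1) : x * (x ^ (-lam)) ^ p = x ^ (-lam) := by
  rw [← ENNReal.rpow_mul]
  nth_rw 1 [← ENNReal.rpow_one x]
  rw [← rpow_add _ _ hx₀ hx]
  congr 1
  linear_combination -hpl

namespace MeasureTheory

variable {X : Type*} [MeasurableSpace X] {μ : Measure X}

theorem tendsto_setLIntegral_of_monotone [SFinite μ] (f : X → ℝ≥0∞) {s : ℕ → Set X}
    (hs : Monotone s) :
    Tendsto (fun n ↦ ∫⁻ x in s n, f x ∂μ) atTop (𝓝 (∫⁻ x in ⋃ n, s n, f x ∂μ)) := by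
  simpa only [Function.comp_def, withDensity_apply'] using
    tendsto_measure_iUnion_atTop (μ := μ.withDensity f) hs

theorem exists_tendsto_setLIntegral_of_ne_top [IsFiniteMeasure μ] {f : X → ℝ≥0∞}
    (hf : Measurable f) (hf_top : ∀ x, f x ≠ ⊤) :
    ∃ s : ℕ → Set X, (∀ n, MeasurableSet (s n)) ∧ (∀ n, ∫⁻ x in s n, f x ∂μ ≠ ⊤) ∧
      Tendsto (fun n ↦ ∫⁻ x in s n, f x ∂μ) atTop (𝓝 (∫⁻ x, f x ∂μ)) := by
  refine ⟨fun n ↦ {x | f x ≤ n}, fun n ↦ measurableSet_le hf measurable_const,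
    fun n ↦ ?_, ?_⟩
  · refine ne_top_of_le_ne_top ?_ (setLIntegral_mono' (measurableSet_le hf measurable_const)
      fun x (hx : f x ≤ n) ↦ hx)
    rw [setLIntegral_const]
    exact mul_ne_top (natCast_ne_top n) (measure_ne_top μ _)
  · have hunion : ⋃ n : ℕ, {x | f x ≤ n} = Set.univ :=
      Set.iUnion_eq_univ_iff.mpr fun x ↦ (ENNReal.exists_nat_gt (hf_top x)).imp fun _ ↦ le_of_lt
    have hmono : Monotone fun n : ℕ ↦ {x | f x ≤ n} := fun m n hmn x (hx : f x ≤ m) ↦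
      hx.trans (by exact_mod_cast hmn)
    simpa only [hunion, Measure.restrict_univ] using tendsto_setLIntegral_of_monotone f hmono

theorem rpow_one_sub_le_lintegral_mul_rpow {p lam : ℝ} (hp : 1 < p) (hpl : lam * (p - 1) = 1)
    {φ α : X → ℝ≥0∞} (hφ : AEMeasurable φ μ) (hα : AEMeasurable α μ)
    (hφ₀ : ∀ x, φ x ≠ 0) (hφ_top : ∀ x, φ x ≠ ⊤) (hα₁ : ∫⁻ x, α x ∂μ = 1) :
    (∫⁻ x, φ x ^ (-lam) ∂μ) ^ (1 - p) ≤ ∫⁻ x, φ x * α x ^ p ∂μ := by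
  have hp₀ : 0 < p := by positivity
  have hlam : lam ≠ 0 := by rintro rfl; simp at hpl
  have hpq : p.HolderConjugate (p * lam) := Real.holderConjugate_iff.mpr ⟨hp, by
    field_simp; linear_combination -hpl⟩
  have hold := ENNReal.lintegral_mul_le_Lp_mul_Lq μ hpq
    ((hφ.pow_const (1 / p)).mul hα) (hφ.pow_const (-(1 / p)))
  have hprod : ∀ x, (φ x ^ (1 / p) * α x) * φ x ^ (-(1 / p)) = α x := fun x ↦ by
    rw [mul_right_comm, ← rpow_add _ _ (hφ₀ x) (hφ_top x)]; simp
  have hf_pow : ∀ x, (φ x ^ (1 / p) * α x) ^ p = φ x * α x ^ p := fun x ↦ by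
    rw [mul_rpow_of_nonneg _ _ (by positivity), ← ENNReal.rpow_mul, one_div_mul_cancel hp₀.ne',
      ENNReal.rpow_one]
  have hg_pow : ∀ x, (φ x ^ (-(1 / p))) ^ (p * lam) = φ x ^ (-lam) := fun x ↦ by
    rw [← ENNReal.rpow_mul]; field_simp
  simp only [Pi.mul_apply, hprod, hf_pow, hg_pow, hα₁] at hold
  have h := ENNReal.rpow_le_rpow hold hp₀.le
  rw [ENNReal.one_rpow, mul_rpow_of_nonneg _ _ (by positivity), ← ENNReal.rpow_mul,
    ← ENNReal.rpow_mul, one_div_mul_cancel hp₀.ne', ENNReal.rpow_one,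
    show 1 / (p * lam) * p = p - 1 by field_simp; linear_combination -hpl] at h
  rw [show 1 - p = -(p - 1) by ring, ENNReal.rpow_neg, ← one_div]
  exact div_le_of_le_mul h

theorem exists_lintegral_eq_one_lintegral_mul_rpow_eq {p lam : ℝ} (hp : 0 < p)
    (hpl : lam * (p - 1) = 1) {φ : X → ℝ≥0∞} (hφ : Measurable φ) (hφ₀ : ∀ x, φ x ≠ 0)
    (hφ_top : ∀ x, φ x ≠ ⊤) {s : Set X} (hs : MeasurableSet s)
    (hc₀ : ∫⁻ x in s, φ x ^ (-lam) ∂μ ≠ 0) (hc : ∫⁻ x in s, φ x ^ (-lam) ∂μ ≠ ⊤) :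
    ∃ α : X → ℝ≥0∞, Measurable α ∧ ∫⁻ x, α x ∂μ = 1 ∧
      ∫⁻ x, φ x * α x ^ p ∂μ = (∫⁻ x in s, φ x ^ (-lam) ∂μ) ^ (1 - p) := by
  set c := ∫⁻ x in s, φ x ^ (-lam) ∂μ
  have hf : Measurable (s.indicator fun x ↦ φ x ^ (-lam)) := (hφ.pow_const _).indicator hs
  have hφα : ∀ x, φ x * (s.indicator (fun x ↦ φ x ^ (-lam)) x * c⁻¹) ^ p =
      s.indicator (fun x ↦ φ x ^ (-lam)) x * c⁻¹ ^ p := fun x ↦ by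
    rw [mul_rpow_of_nonneg _ _ hp.le, ← mul_assoc]
    by_cases hx : x ∈ s
    · simp only [Set.indicator_of_mem hx, mul_rpow_rpow_neg_eq (hφ₀ x) (hφ_top x) hpl]
    · simp only [Set.indicator_of_notMem hx, zero_rpow_of_pos hp, mul_zero]
  refine ⟨fun x ↦ s.indicator (fun x ↦ φ x ^ (-lam)) x * c⁻¹, hf.mul_const _, ?_, ?_⟩
  · rw [lintegral_mul_const _ hf, lintegral_indicator hs, ENNReal.mul_inv_cancel hc₀ hc]
  · simp only [hφα]
    rw [lintegral_mul_const _ hf, lintegral_indicator hs]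
    change c * c⁻¹ ^ p = c ^ (1 - p)
    rw [sub_eq_add_neg, rpow_add _ _ hc₀ hc, ENNReal.rpow_one, ENNReal.rpow_neg, ENNReal.inv_rpow]

end MeasureTheory

/-- Let `(X, μ)` be a measure space with finite measure, `p ∈ (1, ∞)`, and
`φ : X → (0, ∞)` measurable. Then the infimum of `∫_X φ·α^p dμ` over all measurable
`α : X → [0,∞]` with `∫_X α dμ = 1` equals `(∫_X φ^{−λ} dμ)^{−1/λ}` with `λ = 1/(p−1)`. -/
theorem inf_weighted_integral {X : Type*} [MeasurableSpace X] (μ : Measure X)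
    [IsFiniteMeasure μ] (p : ℝ) (hp : 1 < p)
    (φ : X → ℝ≥0∞) (hφm : Measurable φ)
    (hφpos : ∀ x, 0 < φ x) (hφfin : ∀ x, φ x < ⊤)
    (lam : ℝ) (hlam : lam = 1 / (p - 1)) :
    (⨅ α ∈ {α : X → ℝ≥0∞ | Measurable α ∧ ∫⁻ x, α x ∂μ = 1},
        ∫⁻ x, φ x * α x ^ p ∂μ) =
      (∫⁻ x, φ x ^ (-lam) ∂μ) ^ (-(1 / lam)) := by
  have hpl : lam * (p - 1) = 1 := by rw [hlam]; field_simp [(sub_pos.mpr hp).ne']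
  have hφ₀ : ∀ x, φ x ≠ 0 := fun x ↦ (hφpos x).ne'
  have hφ_top : ∀ x, φ x ≠ ⊤ := fun x ↦ (hφfin x).ne
  rw [show -(1 / lam) = 1 - p by rw [hlam, one_div_one_div]; ring]
  refine le_antisymm ?_ (le_iInf₂ fun α ⟨hα, hα₁⟩ ↦ rpow_one_sub_le_lintegral_mul_rpow hp hpl
    hφm.aemeasurable hα.aemeasurable hφ₀ hφ_top hα₁)
  obtain ⟨s, hs, hs_top, hs_lim⟩ := exists_tendsto_setLIntegral_of_ne_top (μ := μ)
    (hφm.pow_const (-lam)) fun x ↦ rpow_ne_top_of_ne_zero (hφ₀ x) (hφ_top x)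
  refine ge_of_tendsto' ((continuous_rpow_const.tendsto _).comp hs_lim) fun n ↦ ?_
  by_cases h₀ : ∫⁻ x in s n, φ x ^ (-lam) ∂μ = 0
  · simp [h₀, zero_rpow_of_neg (by linarith : 1 - p < 0)]
  obtain ⟨α, hα, hα₁, hαs⟩ := exists_lintegral_eq_one_lintegral_mul_rpow_eq (by linarith) hpl
    hφm hφ₀ hφ_top (hs n) h₀ (hs_top n)
  exact iInf₂_le_of_le α ⟨hα, hα₁⟩ hαs.le
end

section
/- Let (X, μ) be a measure space with finite total measure, let p ∈ (1, ∞), let φ : X → (0, ∞) be measurable, and set λ = 1/(p − 1). Suppose 0 < ∫_X φ^{−λ} dμ < ∞ and set C = ( ∫_X φ^{−λ} dμ )^{−1} and α₀ = C·φ^{−λ}. Then ∫_X α₀ dμ = 1 and ∫_X φ·α₀^p dμ = ( ∫_X φ^{−λ} dμ )^{−1/λ}; moreover, the infimum of ∫_X φ·α^p dμ over all measurable α : X → [0, ∞] with ∫_X α dμ = 1 is attained only at α₀, i.e., any such α with ∫_X φ·α^p dμ = ( ∫_X φ^{−λ} dμ )^{−1/λ} coincides with α₀ μ-almost everywhere.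 -/
open MeasureTheory ENNReal NNReal

/-! Write `λ = (p - 1)⁻¹`, so that `-1/λ = 1 - p`. Hölder's inequality with exponents `1/p` and
`1 - 1/p`, applied to `γ = (φ γ^p)^(1/p) · (φ^(-λ))^(1 - 1/p)`, gives
`(∫ γ)^p ≤ (∫ φ γ^p) (∫ φ^(-λ))^(p-1)`, so every probability density `γ` satisfies
`∫ φ γ^p ≥ (∫ φ^(-λ))^(1-p)`, and `α₀ = φ^(-λ) / ∫ φ^(-λ)` attains this bound.
If `α` attains it too, so does the density `(α + α₀)/2`; then the pointwise inequality
`φ ((α + α₀)/2)^p ≤ (φ α^p + φ α₀^p)/2` has equal (finite) integrals, hence is an a.e. equality,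
and strict convexity of `t ↦ t^p` forces `α = α₀` a.e. -/

theorem ENNReal.eq_of_rpow_midpoint_eq {p : ℝ} (hp : 1 < p) {a b : ℝ≥0∞} (ha : a ≠ ⊤)
    (hb : b ≠ ⊤) (h : (2⁻¹ * a + 2⁻¹ * b) ^ p = 2⁻¹ * a ^ p + 2⁻¹ * b ^ p) : a = b := by
  lift a to ℝ≥0 using ha
  lift b to ℝ≥0 using hb
  have hp0 : 0 ≤ p := by linarith
  simp only [← ENNReal.coe_rpow_of_nonneg _ hp0, ← ENNReal.coe_inv_two] at h
  norm_cast at h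
  by_contra hne
  refine ((strictConvexOn_rpow hp).2 a.2 b.2 (by simpa using hne) (half_pos one_pos)
    (half_pos one_pos) (add_halves 1)).ne ?_
  simpa using congrArg NNReal.toReal h

section

variable {X : Type*} [MeasurableSpace X] {μ : Measure X} {p : ℝ} {φ : X → ℝ≥0∞}

theorem lintegral_rpow_le_lintegral_mul_rpow_mul (hp : 1 < p) (hφ : AEMeasurable φ μ)
    (hφ0 : ∀ x, φ x ≠ 0) (hφtop : ∀ x, φ x ≠ ⊤) {γ : X → ℝ≥0∞} (hγ : AEMeasurable γ μ) :
    (∫⁻ x, γ x ∂μ) ^ p ≤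
      (∫⁻ x, φ x * γ x ^ p ∂μ) * (∫⁻ x, φ x ^ (-(p - 1)⁻¹) ∂μ) ^ (p - 1) := by
  have hp0 : 0 < p := by linarith
  have hp1 : p - 1 ≠ 0 := by linarith
  have hsplit : ∀ x, (φ x * γ x ^ p) ^ p⁻¹ * (φ x ^ (-(p - 1)⁻¹)) ^ (1 - p⁻¹) = γ x := by
    intro x
    have hexp : p⁻¹ + -(p - 1)⁻¹ * (1 - p⁻¹) = 0 := by field_simp; ring
    rw [ENNReal.mul_rpow_of_nonneg _ _ (by positivity), ← ENNReal.rpow_mul, ← ENNReal.rpow_mul,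
      mul_inv_cancel₀ hp0.ne', ENNReal.rpow_one, mul_right_comm,
      ← ENNReal.rpow_add _ _ (hφ0 x) (hφtop x), hexp, ENNReal.rpow_zero, one_mul]
  have holder := lintegral_mul_norm_pow_le (f := fun x => φ x * γ x ^ p)
    (hφ.mul (hγ.pow_const p)) (hφ.pow_const (-(p - 1)⁻¹))
    (inv_nonneg.2 hp0.le) (sub_nonneg.2 (inv_le_one_of_one_le₀ hp.le)) (add_sub_cancel _ _)
  rw [lintegral_congr hsplit] at holder
  calc (∫⁻ x, γ x ∂μ) ^ p
      ≤ ((∫⁻ x, φ x * γ x ^ p ∂μ) ^ p⁻¹ * (∫⁻ x, φ x ^ (-(p - 1)⁻¹) ∂μ) ^ (1 - p⁻¹)) ^ p :=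
        ENNReal.rpow_le_rpow holder hp0.le
    _ = _ := by
      rw [ENNReal.mul_rpow_of_nonneg _ _ hp0.le, ← ENNReal.rpow_mul, ← ENNReal.rpow_mul,
        inv_mul_cancel₀ hp0.ne', ENNReal.rpow_one, sub_mul, one_mul, inv_mul_cancel₀ hp0.ne']

theorem rpow_one_sub_le_lintegral_mul_rpow (hp : 1 < p) (hφ : AEMeasurable φ μ)
    (hφ0 : ∀ x, φ x ≠ 0) (hφtop : ∀ x, φ x ≠ ⊤) {γ : X → ℝ≥0∞} (hγ : AEMeasurable γ μ)
    (hγ1 : ∫⁻ x, γ x ∂μ = 1) :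
    (∫⁻ x, φ x ^ (-(p - 1)⁻¹) ∂μ) ^ (1 - p) ≤ ∫⁻ x, φ x * γ x ^ p ∂μ := by
  have holder := lintegral_rpow_le_lintegral_mul_rpow_mul hp hφ hφ0 hφtop hγ
  rw [hγ1, ENNReal.one_rpow] at holder
  rw [show 1 - p = -(p - 1) by ring, ENNReal.rpow_neg, ENNReal.inv_le_iff_le_mul, mul_comm]
  · exact holder
  all_goals intro h h'; simp [h, h'] at holder

theorem ae_ne_top_of_lintegral_mul_rpow_ne_top (hp : 0 < p) (hφ : AEMeasurable φ μ)
    (hφ0 : ∀ x, φ x ≠ 0) {α : X → ℝ≥0∞} (hα : AEMeasurable α μ)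
    (hαfin : ∫⁻ x, φ x * α x ^ p ∂μ ≠ ⊤) : ∀ᵐ x ∂μ, α x ≠ ⊤ := by
  filter_upwards [ae_lt_top' (hφ.mul (hα.pow_const p)) hαfin] with x hx hαx
  simp [hαx, ENNReal.top_rpow_of_pos hp, hφ0 x] at hx

theorem ae_eq_of_lintegral_mul_rpow_midpoint_ge (hp : 1 < p) (hφ : AEMeasurable φ μ)
    (hφ0 : ∀ x, φ x ≠ 0) (hφtop : ∀ x, φ x ≠ ⊤) {α β : X → ℝ≥0∞} (hα : AEMeasurable α μ)
    (hβ : AEMeasurable β μ) (hαfin : ∫⁻ x, φ x * α x ^ p ∂μ ≠ ⊤)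
    (hβfin : ∫⁻ x, φ x * β x ^ p ∂μ ≠ ⊤)
    (hmid : 2⁻¹ * ∫⁻ x, φ x * α x ^ p ∂μ + 2⁻¹ * ∫⁻ x, φ x * β x ^ p ∂μ ≤
      ∫⁻ x, φ x * (2⁻¹ * α x + 2⁻¹ * β x) ^ p ∂μ) :
    α =ᵐ[μ] β := by
  have hp0 : 0 < p := by linarith
  have hαp : AEMeasurable (fun x => φ x * α x ^ p) μ := hφ.mul (hα.pow_const p)
  have hβp : AEMeasurable (fun x => φ x * β x ^ p) μ := hφ.mul (hβ.pow_const p)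
  have hjensen : ∀ x, φ x * (2⁻¹ * α x + 2⁻¹ * β x) ^ p ≤
      2⁻¹ * (φ x * α x ^ p) + 2⁻¹ * (φ x * β x ^ p) := fun x =>
    calc φ x * (2⁻¹ * α x + 2⁻¹ * β x) ^ p
        ≤ φ x * (2⁻¹ * α x ^ p + 2⁻¹ * β x ^ p) := by
          gcongr
          exact ENNReal.rpow_arith_mean_le_arith_mean2_rpow _ _ _ _
            ENNReal.inv_two_add_inv_two hp.le
      _ = 2⁻¹ * (φ x * α x ^ p) + 2⁻¹ * (φ x * β x ^ p) := by ring
  have haverage : ∫⁻ x, 2⁻¹ * (φ x * α x ^ p) + 2⁻¹ * (φ x * β x ^ p) ∂μ =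
      2⁻¹ * ∫⁻ x, φ x * α x ^ p ∂μ + 2⁻¹ * ∫⁻ x, φ x * β x ^ p ∂μ := by
    rw [lintegral_add_left' (hαp.const_mul _), lintegral_const_mul' _ _ (by simp),
      lintegral_const_mul' _ _ (by simp)]
  have hae := ae_eq_of_ae_le_of_lintegral_le (Filter.Eventually.of_forall hjensen)
    ((lintegral_mono hjensen).trans_lt (haverage ▸ by finiteness)).ne
    ((hαp.const_mul _).add (hβp.const_mul _)) (haverage ▸ hmid)
  filter_upwards [hae, ae_ne_top_of_lintegral_mul_rpow_ne_top hp0 hφ hφ0 hα hαfin,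
    ae_ne_top_of_lintegral_mul_rpow_ne_top hp0 hφ hφ0 hβ hβfin] with x hx hαx hβx
  refine ENNReal.eq_of_rpow_midpoint_eq hp hαx hβx ?_
  exact (ENNReal.mul_right_inj (hφ0 x) (hφtop x)).1 (hx.trans (by ring))

theorem ae_eq_of_lintegral_mul_rpow_eq_of_forall_le (hp : 1 < p) (hφ : AEMeasurable φ μ)
    (hφ0 : ∀ x, φ x ≠ 0) (hφtop : ∀ x, φ x ≠ ⊤) {m : ℝ≥0∞} (hm : m ≠ ⊤)
    (hbound : ∀ γ : X → ℝ≥0∞, AEMeasurable γ μ → ∫⁻ x, γ x ∂μ = 1 →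
      m ≤ ∫⁻ x, φ x * γ x ^ p ∂μ)
    {α β : X → ℝ≥0∞} (hα : AEMeasurable α μ) (hβ : AEMeasurable β μ)
    (hα1 : ∫⁻ x, α x ∂μ = 1) (hβ1 : ∫⁻ x, β x ∂μ = 1)
    (hαm : ∫⁻ x, φ x * α x ^ p ∂μ = m) (hβm : ∫⁻ x, φ x * β x ^ p ∂μ = m) :
    α =ᵐ[μ] β := by
  refine ae_eq_of_lintegral_mul_rpow_midpoint_ge hp hφ hφ0 hφtop hα hβ (hαm ▸ hm) (hβm ▸ hm) ?_
  have hmid1 : ∫⁻ x, 2⁻¹ * α x + 2⁻¹ * β x ∂μ = 1 := by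
    rw [lintegral_add_left' (hα.const_mul _), lintegral_const_mul' _ _ (by simp),
      lintegral_const_mul' _ _ (by simp), hα1, hβ1, mul_one, ENNReal.inv_two_add_inv_two]
  calc 2⁻¹ * ∫⁻ x, φ x * α x ^ p ∂μ + 2⁻¹ * ∫⁻ x, φ x * β x ^ p ∂μ = m := by
        rw [hαm, hβm, ← add_mul, ENNReal.inv_two_add_inv_two, one_mul]
    _ ≤ _ := hbound _ ((hα.const_mul _).add (hβ.const_mul _)) hmid1

noncomputable def optimalDensity (μ : Measure X) (p : ℝ) (φ : X → ℝ≥0∞) (x : X) : ℝ≥0∞ :=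
  (∫⁻ y, φ y ^ (-(p - 1)⁻¹) ∂μ)⁻¹ * φ x ^ (-(p - 1)⁻¹)

theorem lintegral_optimalDensity (h0 : ∫⁻ x, φ x ^ (-(p - 1)⁻¹) ∂μ ≠ 0)
    (htop : ∫⁻ x, φ x ^ (-(p - 1)⁻¹) ∂μ ≠ ⊤) : ∫⁻ x, optimalDensity μ p φ x ∂μ = 1 := by
  simp only [optimalDensity]
  rw [lintegral_const_mul' _ _ (ENNReal.inv_ne_top.2 h0),
    ENNReal.inv_mul_cancel h0 htop]

theorem lintegral_mul_optimalDensity_rpow (hp : 1 < p) (hφ0 : ∀ x, φ x ≠ 0)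
    (hφtop : ∀ x, φ x ≠ ⊤) (h0 : ∫⁻ x, φ x ^ (-(p - 1)⁻¹) ∂μ ≠ 0)
    (htop : ∫⁻ x, φ x ^ (-(p - 1)⁻¹) ∂μ ≠ ⊤) :
    ∫⁻ x, φ x * optimalDensity μ p φ x ^ p ∂μ = (∫⁻ x, φ x ^ (-(p - 1)⁻¹) ∂μ) ^ (1 - p) := by
  set I := ∫⁻ x, φ x ^ (-(p - 1)⁻¹) ∂μ
  have hp0 : 0 < p := by linarith
  have hp1 : p - 1 ≠ 0 := by linarith
  have hpoint : ∀ x, φ x * optimalDensity μ p φ x ^ p = I ^ (-p) * φ x ^ (-(p - 1)⁻¹) := by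
    intro x
    have hexp : 1 + -(p - 1)⁻¹ * p = -(p - 1)⁻¹ := by field_simp; ring
    rw [optimalDensity, ENNReal.mul_rpow_of_nonneg _ _ hp0.le, ENNReal.inv_rpow,
      ← ENNReal.rpow_neg, ← ENNReal.rpow_mul, mul_left_comm]
    nth_rw 1 [← ENNReal.rpow_one (φ x)]
    rw [← ENNReal.rpow_add _ _ (hφ0 x) (hφtop x), hexp]
  rw [lintegral_congr hpoint, lintegral_const_mul' _ _ (ENNReal.rpow_ne_top_of_ne_zero h0 htop),
    show 1 - p = -p + 1 by ring, ENNReal.rpow_add _ _ h0 htop, ENNReal.rpow_one]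

end

theorem inf_weighted_integral_unique_minimizer_general {X : Type*} [MeasurableSpace X]
    (μ : Measure X) (p : ℝ) (hp : 1 < p)
    (φ : X → ℝ≥0∞) (hφm : Measurable φ)
    (hφpos : ∀ x, 0 < φ x) (hφfin : ∀ x, φ x < ⊤)
    (lam : ℝ) (hlam : lam = 1 / (p - 1))
    (hpos : 0 < ∫⁻ x, φ x ^ (-lam) ∂μ) (hfin : (∫⁻ x, φ x ^ (-lam) ∂μ) < ⊤)
    (C : ℝ≥0∞) (hC : C = (∫⁻ x, φ x ^ (-lam) ∂μ)⁻¹)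
    (α₀ : X → ℝ≥0∞) (hα₀ : α₀ = fun x => C * φ x ^ (-lam)) :
    (∫⁻ x, α₀ x ∂μ = 1) ∧
    (∫⁻ x, φ x * α₀ x ^ p ∂μ = (∫⁻ x, φ x ^ (-lam) ∂μ) ^ (-(1 / lam))) ∧
    (∀ α : X → ℝ≥0∞, Measurable α → (∫⁻ x, α x ∂μ) = 1 →
      (∫⁻ x, φ x * α x ^ p ∂μ) = (∫⁻ x, φ x ^ (-lam) ∂μ) ^ (-(1 / lam)) →
      α =ᵐ[μ] α₀) := by
  subst hC hα₀ hlam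
  rw [one_div_one_div, neg_sub]
  simp only [one_div] at hpos hfin ⊢
  have hφ0 : ∀ x, φ x ≠ 0 := fun x => (hφpos x).ne'
  have hφtop : ∀ x, φ x ≠ ⊤ := fun x => (hφfin x).ne
  have hoptimal := lintegral_mul_optimalDensity_rpow hp hφ0 hφtop hpos.ne' hfin.ne
  refine ⟨lintegral_optimalDensity hpos.ne' hfin.ne, hoptimal, fun α hα hα1 hαmin => ?_⟩
  exact ae_eq_of_lintegral_mul_rpow_eq_of_forall_le hp hφm.aemeasurable hφ0 hφtop
    (ENNReal.rpow_ne_top_of_ne_zero hpos.ne' hfin.ne)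
    (fun γ hγ hγ1 => rpow_one_sub_le_lintegral_mul_rpow hp hφm.aemeasurable hφ0 hφtop hγ hγ1)
    hα.aemeasurable ((hφm.pow_const _).const_mul _).aemeasurable hα1
    (lintegral_optimalDensity hpos.ne' hfin.ne) hαmin hoptimal

/-- Let `(X, μ)` be a finite measure space, `p ∈ (1, ∞)`, `φ : X → (0, ∞)` measurable,
`λ = 1/(p−1)`, and suppose `0 < ∫_X φ^{−λ} dμ < ∞`. With `C = (∫_X φ^{−λ} dμ)⁻¹` and
`α₀ = C·φ^{−λ}`, one has `∫_X α₀ dμ = 1` and `∫_X φ·α₀^p dμ = (∫_X φ^{−λ} dμ)^{−1/λ}`;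
moreover the infimum of `∫_X φ·α^p dμ` over measurable `α` with `∫_X α dμ = 1` is attained
only at `α₀`: any such minimizer coincides with `α₀` almost everywhere. -/
theorem inf_weighted_integral_unique_minimizer {X : Type*} [MeasurableSpace X]
    (μ : Measure X) [IsFiniteMeasure μ] (p : ℝ) (hp : 1 < p)
    (φ : X → ℝ≥0∞) (hφm : Measurable φ)
    (hφpos : ∀ x, 0 < φ x) (hφfin : ∀ x, φ x < ⊤)
    (lam : ℝ) (hlam : lam = 1 / (p - 1))
    (hpos : 0 < ∫⁻ x, φ x ^ (-lam) ∂μ) (hfin : (∫⁻ x, φ x ^ (-lam) ∂μ) < ⊤)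
    (C : ℝ≥0∞) (hC : C = (∫⁻ x, φ x ^ (-lam) ∂μ)⁻¹)
    (α₀ : X → ℝ≥0∞) (hα₀ : α₀ = fun x => C * φ x ^ (-lam)) :
    (∫⁻ x, α₀ x ∂μ = 1) ∧
    (∫⁻ x, φ x * α₀ x ^ p ∂μ = (∫⁻ x, φ x ^ (-lam) ∂μ) ^ (-(1 / lam))) ∧
    (∀ α : X → ℝ≥0∞, Measurable α → (∫⁻ x, α x ∂μ) = 1 →
      (∫⁻ x, φ x * α x ^ p ∂μ) = (∫⁻ x, φ x ^ (-lam) ∂μ) ^ (-(1 / lam)) →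
      α =ᵐ[μ] α₀) :=
  inf_weighted_integral_unique_minimizer_general μ p hp φ hφm hφpos hφfin lam hlam hpos hfin C hC α₀
    hα₀
end
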